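/- arXiv:1111.3507 — 10 statements merged into one kernel-verified Lean document; each statement's English description precedes it below -/
import Mathlib

section
/- Let n be a prime with n ≡ 7 or 31 (mod 36). Then the polynomial x² + 3x + 3 has exactly two roots in Z/nZ, one of which has odd multiplicative order and the other even multiplicative order. -/
theorem stmt3 (n : ℕ) (hn : n.Prime) (hmod : n % 36 = 7 ∨ n % 36 = 31) :
    ∃ x₁ x₂ : ZMod n, x₁ ≠ x₂ ∧
      (∀ x : ZMod n, x ^ 2 + 3 * x + 3 = 0 ↔ x = x₁ ∨ x = x₂) ∧
      Odd (orderOf x₁) ∧ Even (orderOf x₂) := by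
  haveI F : Fact n.Prime := ⟨hn⟩
  have h7 : 7 ≤ n := by omega
  haveI : NeZero n := ⟨by omega⟩
  have h3dvd : 3 ∣ n - 1 := by omega
  have h3ne : (3 : ZMod n) ≠ 0 := by
    intro h
    have : ((3 : ℕ) : ZMod n) = 0 := by push_cast; exact h
    have hd := (ZMod.natCast_eq_zero_iff 3 n).mp this
    have := Nat.le_of_dvd (by norm_num) hd
    omega
  have hneg1 : (-1 : ZMod n) ≠ 1 := by
    intro h
    have h2 : ((2 : ℕ) : ZMod n) = 0 := by push_cast; linear_combination -h
    have hd := (ZMod.natCast_eq_zero_iff 2 n).mp h2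
    have := Nat.le_of_dvd (by norm_num) hd
    omega
  -- get a primitive cube root of unity
  obtain ⟨g, hg⟩ := IsCyclic.exists_generator (α := (ZMod n)ˣ)
  have hog : orderOf g = n - 1 := by
    rw [orderOf_eq_card_of_forall_mem_zpowers hg, Nat.card_eq_fintype_card,
      ZMod.card_units_eq_totient, Nat.totient_prime hn]
  set k := (n - 1) / 3 with hkdef
  have hk : n - 1 = k * 3 := by omega
  have hkpos : 0 < k := by omega
  have hou : orderOf (g ^ k) = 3 := by
    rw [orderOf_pow, hog]
    have hgcd : (n - 1).gcd k = k := Nat.gcd_eq_right ⟨3, by omega⟩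
    rw [hgcd, hk, Nat.mul_div_cancel_left _ hkpos]
  set ω : ZMod n := ((g ^ k : (ZMod n)ˣ) : ZMod n) with hωdef
  have hω3 : ω ^ 3 = 1 := by
    have : (g ^ k) ^ 3 = 1 := by rw [← hou]; exact pow_orderOf_eq_one _
    rw [hωdef, ← Units.val_pow_eq_pow_val, this, Units.val_one]
  have hω1 : ω ≠ 1 := by
    intro h
    have : (g ^ k) = 1 := Units.ext h
    rw [this, orderOf_one] at hou
    omega
  have hquad : ω ^ 2 + ω + 1 = 0 := by
    have hfac : (ω - 1) * (ω ^ 2 + ω + 1) = 0 := by linear_combination hω3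
    rcases mul_eq_zero.mp hfac with h | h
    · exact absurd (by linear_combination h) hω1
    · exact h
  -- the two roots
  have hx1ne0 : ω - 1 ≠ 0 := fun h => hω1 (by linear_combination h)
  have hx2ne0 : (-ω - 2 : ZMod n) ≠ 0 := fun h => h3ne (by linear_combination hquad + (ω - 1) * h)
  have hne : ω - 1 ≠ -ω - 2 := fun h => h3ne (by linear_combination 4 * hquad - (2 * ω + 1) * h)
  have hiff : ∀ x : ZMod n, x ^ 2 + 3 * x + 3 = 0 ↔ x = ω - 1 ∨ x = -ω - 2 := by
    intro x
    have hfac : x ^ 2 + 3 * x + 3 = (x - (ω - 1)) * (x - (-ω - 2)) := by linear_combination hquad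
    rw [hfac, mul_eq_zero, sub_eq_zero, sub_eq_zero]
  -- parity of order vs m-th power
  set m : ℕ := (n - 1) / 2 with hmdef
  have hm2 : n - 1 = 2 * m := by omega
  have hmodd : Odd m := by rw [Nat.odd_iff]; omega
  have hA : ∀ a : ZMod n, a ≠ 0 → (a ^ m = 1 ↔ Odd (orderOf a)) := by
    intro a ha
    constructor
    · intro h
      have hd : orderOf a ∣ m := orderOf_dvd_of_pow_eq_one h
      rcases Nat.even_or_odd (orderOf a) with he | ho
      · exfalso
        have h2d : (2 : ℕ) ∣ m := dvd_trans he.two_dvd hd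
        rw [Nat.odd_iff] at hmodd
        omega
      · exact ho
    · rintro ⟨j, hj⟩
      have h1 : a ^ (n - 1) = 1 := ZMod.pow_card_sub_one_eq_one ha
      have hd : orderOf a ∣ 2 * m := by rw [← hm2]; exact orderOf_dvd_of_pow_eq_one h1
      have hcop : (orderOf a).Coprime 2 := by
        rw [hj]
        exact Nat.coprime_comm.mp ((Nat.prime_two.coprime_iff_not_dvd).mpr (by omega))
      have : orderOf a ∣ m := hcop.dvd_of_dvd_mul_left hd
      exact orderOf_dvd_iff_pow_eq_one.mp this
  have hB : ∀ a : ZMod n, a ≠ 0 → (IsSquare a ↔ a ^ m = 1) := by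
    intro a ha
    constructor
    · rintro ⟨b, hb⟩
      have hbne : b ≠ 0 := by rintro rfl; rw [mul_zero] at hb; exact ha hb
      rw [hb]
      calc (b * b) ^ m = b ^ (2 * m) := by ring
        _ = b ^ (n - 1) := by rw [hm2]
        _ = 1 := ZMod.pow_card_sub_one_eq_one hbne
    · intro h
      obtain ⟨j, hj⟩ := (hA a ha).mp h
      refine ⟨a ^ (j + 1), ?_⟩
      have hpow : a ^ (2 * j + 1) = 1 := by rw [← hj]; exact pow_orderOf_eq_one a
      calc a = a ^ (2 * j + 1) * a := by rw [hpow, one_mul]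
        _ = a ^ (j + 1) * a ^ (j + 1) := by ring
  -- -3 is a square, 3 is not
  have hneg3ne : (-3 : ZMod n) ≠ 0 := fun h => h3ne (by linear_combination -h)
  have hneg3sq : IsSquare (-3 : ZMod n) := ⟨2 * ω + 1, by linear_combination -4 * hquad⟩
  have h3m : (3 : ZMod n) ^ m ≠ 1 := by
    intro h
    have hn3 : (-3 : ZMod n) ^ m = 1 := (hB _ hneg3ne).mp hneg3sq
    rw [neg_pow, hmodd.neg_one_pow, h, mul_one] at hn3
    exact hneg1 hn3
  have hsq1 : ∀ a : ZMod n, a ≠ 0 → a ^ m = 1 ∨ a ^ m = -1 := by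
    intro a ha
    have : (a ^ m) ^ 2 = 1 := by
      rw [← pow_mul, mul_comm, ← hm2]
      exact ZMod.pow_card_sub_one_eq_one ha
    exact sq_eq_one_iff.mp this
  have hprod : (ω - 1) * (-ω - 2) = 3 := by linear_combination -hquad
  have hx12 : (ω - 1) ^ m * (-ω - 2) ^ m = (3 : ZMod n) ^ m := by rw [← mul_pow, hprod]
  have h3val : (3 : ZMod n) ^ m = -1 := (hsq1 3 h3ne).resolve_left h3m
  rcases hsq1 _ hx1ne0 with h1 | h1
  · -- x₁ has m-th power 1 : odd order
    have h2 : (-ω - 2 : ZMod n) ^ m = -1 := by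
      rw [h1, one_mul] at hx12; rw [hx12, h3val]
    refine ⟨ω - 1, -ω - 2, hne, hiff, (hA _ hx1ne0).mp h1, ?_⟩
    rw [← Nat.not_odd_iff_even]
    intro ho
    have := (hA _ hx2ne0).mpr ho
    rw [h2] at this
    exact hneg1 this
  · have h2 : (-ω - 2 : ZMod n) ^ m = 1 := by
      have key : (ω - 1) ^ m * (-ω - 2) ^ m = -1 := by rw [hx12, h3val]
      linear_combination -key + ((-ω - 2) ^ m) * h1
    refine ⟨-ω - 2, ω - 1, hne.symm, fun x => (hiff x).trans or_comm, (hA _ hx2ne0).mp h2, ?_⟩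
    rw [← Nat.not_odd_iff_even]
    intro ho
    have := (hA _ hx1ne0).mpr ho
    rw [h1] at this
    exact hneg1 this
end

section
/- Let n be a prime with n ≡ 7 or 31 (mod 36) and n > 7. Suppose x₁ ∈ Z/nZ satisfies x₁² + 3x₁ + 3 = 0 and the multiplicative order of x₁ is (n−1)/6. Then −x₁ − 2 has multiplicative order 3, and U_n is the internal direct product ⟨−x₁−2⟩ × ⟨−1⟩ × ⟨x₁⟩ of cyclic groups of orders 3, 2, and (n−1)/6 respectively; moreover the three generators −x₁−2, −1, x₁ are in arithmetic progression. -/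
/-- `G` is the internal direct product of the cyclic subgroups generated by `x`, `y`, `z`:
the multiplication map from the product of the three subgroups is a bijection onto `G`. -/
def IsDirectProd3 {G : Type*} [Group G] (x y z : G) : Prop :=
  Function.Bijective
    (fun p : (Subgroup.zpowers x) × (Subgroup.zpowers y) × (Subgroup.zpowers z) =>
      (p.1 : G) * (p.2.1 : G) * (p.2.2 : G))

lemma aux_inj {G : Type*} [CommGroup G] {u v w : G} {m : ℕ}
    (hu : orderOf u = 3) (hv : orderOf v = 2) (hw : orderOf w = m)
    (hm2 : Nat.Coprime m 2) (hm3 : Nat.Coprime m 3) :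
    Function.Injective
      (fun p : (Subgroup.zpowers u) × (Subgroup.zpowers v) × (Subgroup.zpowers w) =>
        (p.1 : G) * (p.2.1 : G) * (p.2.2 : G)) := by
  intro p q h
  simp only at h
  set a : G := (p.1 : G) * (q.1 : G)⁻¹ with ha
  set b : G := (p.2.1 : G) * (q.2.1 : G)⁻¹ with hb
  set c : G := (p.2.2 : G) * (q.2.2 : G)⁻¹ with hc
  have key : a * (b * c) = 1 := by
    have : a * (b * c) = ((p.1 : G) * (p.2.1 : G) * (p.2.2 : G)) *
        ((q.1 : G) * (q.2.1 : G) * (q.2.2 : G))⁻¹ := by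
      simp only [ha, hb, hc, mul_inv_rev]
      simp only [mul_assoc, mul_comm, mul_left_comm]
    rw [this, h, mul_inv_cancel]
  have hda : orderOf a ∣ 3 := by
    rw [← hu]; exact orderOf_dvd_of_mem_zpowers (mul_mem p.1.2 (inv_mem q.1.2))
  have hdb : orderOf b ∣ 2 := by
    rw [← hv]; exact orderOf_dvd_of_mem_zpowers (mul_mem p.2.1.2 (inv_mem q.2.1.2))
  have hdc : orderOf c ∣ m := by
    rw [← hw]; exact orderOf_dvd_of_mem_zpowers (mul_mem p.2.2.2 (inv_mem q.2.2.2))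
  have hbc : orderOf (b * c) ∣ 2 * m :=
    ((Commute.all b c).orderOf_mul_dvd_mul_orderOf).trans (mul_dvd_mul hdb hdc)
  have ha1 : a = 1 := by
    have : a = (b * c)⁻¹ := by
      rw [eq_inv_iff_mul_eq_one, mul_comm]; rw [mul_comm] at key; exact key
    have hda' : orderOf a ∣ 2 * m := by rw [this, orderOf_inv]; exact hbc
    have hcop : Nat.Coprime 3 (2 * m) :=
      Nat.coprime_mul_iff_right.mpr ⟨by norm_num, hm3.symm⟩
    have : orderOf a ∣ 1 := hcop ▸ Nat.dvd_gcd hda hda'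
    exact orderOf_eq_one_iff.mp (Nat.dvd_one.mp this)
  have hbc1 : b * c = 1 := by rw [ha1, one_mul] at key; exact key
  have hb1 : b = 1 := by
    have : b = c⁻¹ := eq_inv_of_mul_eq_one_left hbc1
    have hdb' : orderOf b ∣ m := by rw [this, orderOf_inv]; exact hdc
    have hcop : Nat.Coprime 2 m := hm2.symm
    have : orderOf b ∣ 1 := hcop ▸ Nat.dvd_gcd hdb hdb'
    exact orderOf_eq_one_iff.mp (Nat.dvd_one.mp this)
  have hc1 : c = 1 := by rw [hb1, one_mul] at hbc1; exact hbc1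
  have e1 : p.1 = q.1 := Subtype.ext (by rwa [ha, mul_inv_eq_one] at ha1)
  have e2 : p.2.1 = q.2.1 := Subtype.ext (by rwa [hb, mul_inv_eq_one] at hb1)
  have e3 : p.2.2 = q.2.2 := Subtype.ext (by rwa [hc, mul_inv_eq_one] at hc1)
  exact Prod.ext e1 (Prod.ext e2 e3)

theorem stmt5 (n : ℕ) (hn : n.Prime) (hmod : n % 36 = 7 ∨ n % 36 = 31) (hgt : 7 < n)
    (x₁ : ZMod n) (hroot : x₁ ^ 2 + 3 * x₁ + 3 = 0)
    (hord : orderOf x₁ = (n - 1) / 6) :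
    orderOf (-x₁ - 2) = 3 ∧
    ∃ u v w : (ZMod n)ˣ,
      (u : ZMod n) = -x₁ - 2 ∧ (v : ZMod n) = -1 ∧ (w : ZMod n) = x₁ ∧
      orderOf u = 3 ∧ orderOf v = 2 ∧ orderOf w = (n - 1) / 6 ∧
      IsDirectProd3 u v w ∧
      (-1 : ZMod n) - (-x₁ - 2) = x₁ - (-1) := by
  haveI : Fact n.Prime := ⟨hn⟩
  haveI : NeZero n := ⟨by omega⟩
  have h3ne : (3 : ZMod n) ≠ 0 := by
    intro h
    have : (n : ℕ) ∣ 3 := by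
      have := (ZMod.natCast_eq_zero_iff 3 n).mp (by exact_mod_cast h)
      exact this
    have := Nat.le_of_dvd (by norm_num) this
    omega
  have hcube : (-x₁ - 2) ^ 3 = 1 := by linear_combination (-(x₁ + 3)) * hroot
  have hne1 : (-x₁ - 2) ≠ 1 := by
    intro h
    have hx : x₁ = -3 := by linear_combination -h
    rw [hx] at hroot
    apply h3ne
    linear_combination hroot
  have hordu : orderOf (-x₁ - 2) = 3 := orderOf_eq_prime hcube hne1
  have hu0 : (-x₁ - 2) ≠ 0 := by
    intro h; rw [h] at hcube; simp at hcube
  have hx0 : x₁ ≠ 0 := by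
    intro h; rw [h] at hroot; apply h3ne; linear_combination hroot
  set m := (n - 1) / 6 with hm
  have h6 : 6 * m = n - 1 := by omega
  have hm2 : Nat.Coprime m 2 :=
    (Nat.Prime.coprime_iff_not_dvd Nat.prime_two).mpr (by omega) |>.symm
  have hm3 : Nat.Coprime m 3 :=
    (Nat.Prime.coprime_iff_not_dvd Nat.prime_three).mpr (by omega) |>.symm
  refine ⟨hordu, Units.mk0 _ hu0, -1, Units.mk0 _ hx0, rfl, rfl, rfl, ?_, ?_, ?_, ?_, by ring⟩
  · rw [← orderOf_units]; exact hordu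
  · rw [← orderOf_units, Units.coe_neg_one, orderOf_neg_one,
      ringChar.eq (ZMod n) n, if_neg (by omega : n ≠ 2)]
  · rw [← orderOf_units]; exact hord
  · have hou : orderOf (Units.mk0 _ hu0) = 3 := by rw [← orderOf_units]; exact hordu
    have hov : orderOf (-1 : (ZMod n)ˣ) = 2 := by
      rw [← orderOf_units, Units.coe_neg_one, orderOf_neg_one,
        ringChar.eq (ZMod n) n, if_neg (by omega : n ≠ 2)]
    have how : orderOf (Units.mk0 _ hx0) = m := by rw [← orderOf_units]; exact hord
    refine (Nat.bijective_iff_injective_and_card _).mpr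
      ⟨aux_inj hou hov how hm2 hm3, ?_⟩
    rw [Nat.card_prod, Nat.card_prod, Nat.card_zpowers, Nat.card_zpowers,
      Nat.card_zpowers, hou, hov, how, Nat.card_eq_fintype_card, ZMod.card_units]
    omega
end

section
/- Let n be a prime with n ≡ 7 or 31 (mod 36), n > 7. Suppose x₁, x₂ ∈ Z/nZ are the roots of x² + 3x + 3 = 0 with ord_n(x₁) = (n−1)/2 and ord_n(x₂) = n−1. Then x₂ + 1 has order 3 and 2x₂ + 3 has order (n−1)/6, and U_n is the internal direct product ⟨2x₂+3⟩ × ⟨x₂+1⟩ × ⟨−1⟩, with the generators 2x₂+3, x₂+1, −1 in arithmetic progression. -/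
theorem stmt6 (n : ℕ) (hn : n.Prime) (hmod : n % 36 = 7 ∨ n % 36 = 31) (hgt : 7 < n)
    (x₁ x₂ : ZMod n) (hne : x₁ ≠ x₂)
    (hroot₁ : x₁ ^ 2 + 3 * x₁ + 3 = 0) (hroot₂ : x₂ ^ 2 + 3 * x₂ + 3 = 0)
    (hord₁ : orderOf x₁ = (n - 1) / 2) (hord₂ : orderOf x₂ = n - 1) :
    orderOf (x₂ + 1) = 3 ∧ orderOf (2 * x₂ + 3) = (n - 1) / 6 ∧
    ∃ u v w : (ZMod n)ˣ,
      (u : ZMod n) = 2 * x₂ + 3 ∧ (v : ZMod n) = x₂ + 1 ∧ (w : ZMod n) = -1 ∧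
      IsDirectProd3 u v w ∧
      (x₂ + 1) - (2 * x₂ + 3) = (-1 : ZMod n) - (x₂ + 1) := by
  haveI : Fact n.Prime := ⟨hn⟩
  haveI : NeZero n := ⟨hn.ne_zero⟩
  haveI : Fact (Nat.Prime 2) := ⟨Nat.prime_two⟩
  haveI : Fact (Nat.Prime 3) := ⟨Nat.prime_three⟩
  set m : ℕ := (n - 1) / 6 with hm
  have h6m : n - 1 = 6 * m := by omega
  have hm6 : m % 6 = 1 ∨ m % 6 = 5 := by rcases hmod with h | h <;> omega
  have hmpos : 0 < m := by omega
  have hhalf : (n - 1) / 2 = 3 * m := by omega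
  have h3ne : (3 : ZMod n) ≠ 0 := by
    have h' : ¬ (n ∣ 3) := fun h => by have := Nat.le_of_dvd (by norm_num) h; omega
    intro h
    exact h' ((ZMod.natCast_eq_zero_iff 3 n).mp (by exact_mod_cast h))
  have h2ne : (2 : ZMod n) ≠ 0 := by
    have h' : ¬ (n ∣ 2) := fun h => by have := Nat.le_of_dvd (by norm_num) h; omega
    intro h
    exact h' ((ZMod.natCast_eq_zero_iff 2 n).mp (by exact_mod_cast h))
  set ω := x₂ + 1 with hω
  set t := 2 * x₂ + 3 with ht
  -- algebraic identities
  have hid1 : x₁ + x₂ + 3 = 0 := by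
    have h : (x₁ - x₂) * (x₁ + x₂ + 3) = 0 := by linear_combination hroot₁ - hroot₂
    rcases mul_eq_zero.mp h with h | h
    · exact absurd (sub_eq_zero.mp h) hne
    · exact h
  have hx1t : x₁ = t * ω := by linear_combination hid1 - 2 * hroot₂
  have hx2t : x₂ = -(t * ω ^ 2) := by linear_combination (2 * x₂ + 1) * hroot₂
  have hω3 : ω ^ 3 = 1 := by linear_combination x₂ * hroot₂
  have hωsum : ω ^ 2 + ω + 1 = 0 := by linear_combination hroot₂
  have ht2 : t ^ 2 = -3 := by linear_combination 4 * hroot₂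
  have ht0 : t ≠ 0 := by
    intro h
    rw [h] at ht2
    apply h3ne
    linear_combination ht2
  have hx2ne : x₂ ≠ 0 := by
    intro h; apply h3ne; linear_combination hroot₂ - (x₂ + 3) * h
  have hωne1 : ω ≠ 1 := by
    intro h; apply hx2ne; have : x₂ + 1 = 1 := h; linear_combination this
  have hωne0 : ω ≠ 0 := by
    intro h
    exact one_ne_zero (α := ZMod n) (by rw [← hω3, h]; ring)
  -- order facts
  have hx1pow : x₁ ^ (3 * m) = 1 := by
    rw [← hhalf, ← hord₁]; exact pow_orderOf_eq_one x₁
  have hx1m : x₁ ^ m ≠ 1 := by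
    intro h
    have h' := orderOf_dvd_of_pow_eq_one h
    rw [hord₁, hhalf] at h'
    have := Nat.le_of_dvd hmpos h'
    omega
  have hx2_2m : x₂ ^ (2 * m) ≠ 1 := by
    intro h
    have h' := orderOf_dvd_of_pow_eq_one h
    rw [hord₂, h6m] at h'
    have := Nat.le_of_dvd (by omega) h'
    omega
  have hωm : ω ^ m = ω ^ (m % 3) := by
    conv_lhs => rw [← Nat.div_add_mod m 3]
    rw [pow_add, pow_mul, hω3, one_pow, one_mul]
  have hpowcomm : ∀ (z : ZMod n) (i j : ℕ), (z ^ i) ^ j = (z ^ j) ^ i := by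
    intro z i j; rw [← pow_mul, mul_comm, pow_mul]
  have ht3m : t ^ (3 * m) = 1 := by
    have h : x₁ ^ (3 * m) = t ^ (3 * m) * ω ^ (3 * m) := by rw [hx1t, mul_pow]
    rw [pow_mul ω 3 m, hω3, one_pow, mul_one] at h
    rw [← h]; exact hx1pow
  have hcube : (t ^ m) ^ 3 = 1 := by rw [← pow_mul, mul_comm]; exact ht3m
  have hcases : t ^ m = 1 ∨ t ^ m = ω ∨ t ^ m = ω ^ 2 := by
    have h0 : (t ^ m - 1) * ((t ^ m - ω) * (t ^ m - ω ^ 2)) = 0 := by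
      linear_combination hcube + (t ^ m - (t ^ m) ^ 2) * hωsum + (t ^ m - 1) * hω3
    rcases mul_eq_zero.mp h0 with h | h
    · exact Or.inl (sub_eq_zero.mp h)
    · rcases mul_eq_zero.mp h with h | h
      · exact Or.inr (Or.inl (sub_eq_zero.mp h))
      · exact Or.inr (Or.inr (sub_eq_zero.mp h))
  have hm3 : m % 3 = 1 ∨ m % 3 = 2 := by omega
  have hx1m_eq : x₁ ^ m = t ^ m * ω ^ (m % 3) := by rw [hx1t, mul_pow, hωm]
  have hx2_2m_eq : x₂ ^ (2 * m) = (t ^ m) ^ 2 * (ω ^ (m % 3)) ^ 4 := by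
    have hsq : x₂ ^ 2 = t ^ 2 * ω ^ 4 := by rw [hx2t]; ring
    rw [pow_mul, hsq, mul_pow, hpowcomm t 2 m, hpowcomm ω 4 m, hωm]
  have hsm : t ^ m = 1 := by
    rcases hcases with h | h | h
    · exact h
    · exfalso
      rcases hm3 with h3 | h3
      · apply hx2_2m
        rw [hx2_2m_eq, h, h3]
        linear_combination (ω ^ 3 + 1) * hω3
      · apply hx1m
        rw [hx1m_eq, h, h3]
        linear_combination hω3
    · exfalso
      rcases hm3 with h3 | h3
      · apply hx1m
        rw [hx1m_eq, h, h3]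
        linear_combination hω3
      · apply hx2_2m
        rw [hx2_2m_eq, h, h3]
        linear_combination (ω ^ 9 + ω ^ 6 + ω ^ 3 + 1) * hω3
  -- orders
  have hordt : orderOf t = m := by
    have h1 : orderOf t ∣ m := orderOf_dvd_of_pow_eq_one hsm
    have h2 : m ∣ orderOf t := by
      have hx : x₁ ^ (orderOf t * 3) = 1 := by
        have h : x₁ ^ (orderOf t * 3) = t ^ (orderOf t * 3) * ω ^ (orderOf t * 3) := by
          rw [hx1t, mul_pow]
        rw [mul_comm (orderOf t) 3, pow_mul ω 3 (orderOf t), hω3, one_pow, mul_one,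
          mul_comm 3 (orderOf t), pow_mul t (orderOf t) 3, pow_orderOf_eq_one, one_pow] at h
        exact h
      have h' := orderOf_dvd_of_pow_eq_one hx
      rw [hord₁, hhalf, mul_comm (orderOf t) 3] at h'
      exact (mul_dvd_mul_iff_left (by norm_num : (3:ℕ) ≠ 0)).mp h'
    exact Nat.dvd_antisymm h1 h2
  have hordω : orderOf ω = 3 := orderOf_eq_prime hω3 hωne1
  -- units
  set u : (ZMod n)ˣ := Units.mk0 t ht0 with hu
  set v : (ZMod n)ˣ := Units.mk0 ω hωne0 with hv
  set w : (ZMod n)ˣ := -1 with hw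
  have huval : (u : ZMod n) = t := rfl
  have hvval : (v : ZMod n) = ω := rfl
  have hwval : (w : ZMod n) = -1 := by simp [hw]
  have hordu : orderOf u = m := by rw [← orderOf_units, huval]; exact hordt
  have hordv : orderOf v = 3 := by rw [← orderOf_units, hvval]; exact hordω
  have hordw : orderOf w = 2 := by
    apply orderOf_eq_prime
    · rw [hw]; exact neg_one_sq
    · intro h
      apply h2ne
      have h' : (w : ZMod n) = 1 := by rw [h]; simp
      rw [hwval] at h'
      linear_combination -h'
  refine ⟨hordω, hordt, u, v, w, huval, hvval, hwval, ?_, by ring⟩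
  -- direct product
  unfold IsDirectProd3
  rw [Fintype.bijective_iff_injective_and_card]
  constructor
  · rintro ⟨⟨a, ha⟩, ⟨b, hb⟩, ⟨c, hc⟩⟩ ⟨⟨a', ha'⟩, ⟨b', hb'⟩, ⟨c', hc'⟩⟩ h
    simp only [Subtype.coe_mk] at h
    have hdm : (a / a') ^ m = 1 := by
      have : orderOf (a / a') ∣ m := by
        rw [← hordu]
        exact orderOf_dvd_of_mem_zpowers (Subgroup.div_mem _ ha ha')
      exact orderOf_dvd_iff_pow_eq_one.mp this
    have he3 : (b / b') ^ 3 = 1 := by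
      have : orderOf (b / b') ∣ 3 := by
        rw [← hordv]
        exact orderOf_dvd_of_mem_zpowers (Subgroup.div_mem _ hb hb')
      exact orderOf_dvd_iff_pow_eq_one.mp this
    have hf2 : (c / c') ^ 2 = 1 := by
      have : orderOf (c / c') ∣ 2 := by
        rw [← hordw]
        exact orderOf_dvd_of_mem_zpowers (Subgroup.div_mem _ hc hc')
      exact orderOf_dvd_iff_pow_eq_one.mp this
    have hdef : (a / a') * (b / b') * (c / c') = 1 := by
      rw [div_mul_div_comm, div_mul_div_comm, h, div_self']
    have hd6 : (a / a') ^ 6 = 1 := by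
      have hdd : a / a' = ((b / b') * (c / c'))⁻¹ := by
        rw [eq_inv_iff_mul_eq_one, ← mul_assoc]; exact hdef
      rw [hdd, inv_pow, mul_pow]
      have hb6 : (b / b') ^ 6 = 1 := by
        rw [(by norm_num : 6 = 3 * 2), pow_mul, he3, one_pow]
      have hc6 : (c / c') ^ 6 = 1 := by
        rw [(by norm_num : 6 = 2 * 3), pow_mul, hf2, one_pow]
      rw [hb6, hc6, one_mul, inv_one]
    have hcop : Nat.gcd m 6 = 1 := by
      have h2 : Nat.gcd 6 m = Nat.gcd (m % 6) 6 := Nat.gcd_rec 6 m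
      rcases hm6 with h' | h' <;> rw [Nat.gcd_comm, h2, h'] <;> norm_num
    have hd1 : a / a' = 1 := by
      have hdvd : orderOf (a / a') ∣ Nat.gcd m 6 :=
        Nat.dvd_gcd (orderOf_dvd_of_pow_eq_one hdm) (orderOf_dvd_of_pow_eq_one hd6)
      rw [hcop, Nat.dvd_one] at hdvd
      exact orderOf_eq_one_iff.mp hdvd
    have haa : a = a' := by rwa [div_eq_one] at hd1
    have hef : (b / b') * (c / c') = 1 := by rw [hd1, one_mul] at hdef; exact hdef
    have he2 : (b / b') ^ 2 = 1 := by
      have hbb : b / b' = (c / c')⁻¹ := by rw [eq_inv_iff_mul_eq_one]; exact hef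
      rw [hbb, inv_pow, hf2, inv_one]
    have he1 : b / b' = 1 := by
      have hdvd : orderOf (b / b') ∣ Nat.gcd 3 2 :=
        Nat.dvd_gcd (orderOf_dvd_of_pow_eq_one he3) (orderOf_dvd_of_pow_eq_one he2)
      rw [(by norm_num : Nat.gcd 3 2 = 1), Nat.dvd_one] at hdvd
      exact orderOf_eq_one_iff.mp hdvd
    have hbb : b = b' := by rwa [div_eq_one] at he1
    have hcc : c = c' := by
      have : c / c' = 1 := by rw [he1, one_mul] at hef; exact hef
      rwa [div_eq_one] at this
    ext <;> simp [haa, hbb, hcc]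
  · rw [Fintype.card_prod, Fintype.card_prod, Fintype.card_zpowers, Fintype.card_zpowers,
      Fintype.card_zpowers, hordu, hordv, hordw, ZMod.card_units]
    omega
end

section
/- Let n be a prime with n ≡ 7 or 31 (mod 36). Suppose z ∈ Z/nZ satisfies z² + 3z + 3 = 0 and the element z/2 (i.e., z times the inverse of 2 mod n) has multiplicative order (n−1)/6. Then U_n is the internal direct product ⟨z+1⟩ × ⟨z/2⟩ × ⟨−1⟩ of cyclic groups of orders 3, (n−1)/6, and 2, with the generators z+1, z/2, −1 in arithmetic progression. -/
/-!
Since `z (z² + 3z + 3) = (z + 1)³ - 1`, the element `z + 1` has order 3, and `-1` has order 2.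
For `n ≡ 7, 31 (mod 36)` the number `m = (n - 1) / 6` is prime to 6, so the orders `3, m, 2` are
pairwise coprime with product `n - 1 = |U_n|`. In an abelian group, a product of elements of
pairwise coprime orders is trivial only if every factor is, so the multiplication map
`⟨z + 1⟩ × ⟨z / 2⟩ × ⟨-1⟩ → U_n` is an injective homomorphism between groups of the same size.
-/

theorem eq_one_and_eq_one_of_mul_eq_one_of_coprime {G : Type*} [Group G] {a b : G} {k m : ℕ}
    (hab : a * b = 1) (ha : orderOf a ∣ k) (hb : orderOf b ∣ m) (hkm : k.Coprime m) :
    a = 1 ∧ b = 1 := by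
  have hb_inv : b = a⁻¹ := eq_inv_of_mul_eq_one_right hab
  have ha_m : orderOf a ∣ m := by rwa [hb_inv, orderOf_inv] at hb
  have ha_one : a = 1 := orderOf_eq_one_iff.mp (Nat.eq_one_of_dvd_coprimes hkm ha ha_m)
  exact ⟨ha_one, by rw [hb_inv, ha_one, inv_one]⟩

theorem isDirectProd3_of_coprime {G : Type*} [CommGroup G] [Finite G] {x y w : G}
    (hxy : (orderOf x).Coprime (orderOf y)) (hxw : (orderOf x).Coprime (orderOf w))
    (hyw : (orderOf y).Coprime (orderOf w))
    (hcard : orderOf x * orderOf y * orderOf w = Nat.card G) :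
    IsDirectProd3 x y w := by
  let φ := (Subgroup.zpowers x).subtype.coprod
    ((Subgroup.zpowers y).subtype.coprod (Subgroup.zpowers w).subtype)
  have hφ : (fun p : Subgroup.zpowers x × Subgroup.zpowers y × Subgroup.zpowers w =>
      (p.1 : G) * p.2.1 * p.2.2) = φ := funext fun _ => mul_assoc _ _ _
  rw [IsDirectProd3, hφ, Nat.bijective_iff_injective_and_card, injective_iff_map_eq_one]
  refine ⟨?_, by simp only [Nat.card_prod, Nat.card_zpowers, ← hcard, mul_assoc]⟩
  rintro ⟨⟨a, ha⟩, ⟨b, hb⟩, ⟨c, hc⟩⟩ habc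
  have hbc_dvd : orderOf (b * c) ∣ orderOf y * orderOf w :=
    (Commute.all b c).orderOf_mul_dvd_mul_orderOf.trans
      (mul_dvd_mul (orderOf_dvd_of_mem_zpowers hb) (orderOf_dvd_of_mem_zpowers hc))
  obtain ⟨rfl, hbc⟩ := eq_one_and_eq_one_of_mul_eq_one_of_coprime habc
    (orderOf_dvd_of_mem_zpowers ha) hbc_dvd (hxy.mul_right hxw)
  obtain ⟨rfl, rfl⟩ := eq_one_and_eq_one_of_mul_eq_one_of_coprime hbc
    (orderOf_dvd_of_mem_zpowers hb) (orderOf_dvd_of_mem_zpowers hc) hyw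
  rfl

theorem orderOf_add_one_of_sq_add_three_mul_add_three {R : Type*} [CommRing R] {z : R}
    (h3 : (3 : R) ≠ 0) (hz : z ^ 2 + 3 * z + 3 = 0) : orderOf (z + 1) = 3 := by
  refine orderOf_eq_prime (by linear_combination z * hz) fun h => h3 ?_
  have hz0 : z = 0 := by linear_combination h
  simpa [hz0] using hz

theorem ZMod.natCast_ne_zero_of_pos_of_lt {n k : ℕ} (hk : 0 < k) (hkn : k < n) :
    (k : ZMod n) ≠ 0 := by
  rw [Ne, ZMod.natCast_eq_zero_iff]
  exact Nat.not_dvd_of_pos_of_lt hk hkn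

theorem Nat.coprime_sub_one_div_six_six {n : ℕ} (hn : n % 36 = 7 ∨ n % 36 = 31) :
    ((n - 1) / 6).Coprime 6 := by
  have hm : (n - 1) / 6 % 6 = 1 ∨ (n - 1) / 6 % 6 = 5 := by omega
  rw [Nat.Coprime, Nat.gcd_comm, Nat.gcd_rec]
  rcases hm with hm | hm <;> rw [hm] <;> norm_num

theorem stmt7 (n : ℕ) (hn : n.Prime) (hmod : n % 36 = 7 ∨ n % 36 = 31)
    (z : ZMod n) (hroot : z ^ 2 + 3 * z + 3 = 0)
    (hord : orderOf ((2 : ZMod n)⁻¹ * z) = (n - 1) / 6) :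
    ∃ u v w : (ZMod n)ˣ,
      (u : ZMod n) = z + 1 ∧ (v : ZMod n) = (2 : ZMod n)⁻¹ * z ∧ (w : ZMod n) = -1 ∧
      orderOf u = 3 ∧ orderOf v = (n - 1) / 6 ∧ orderOf w = 2 ∧
      IsDirectProd3 u v w ∧
      ((2 : ZMod n)⁻¹ * z) - (z + 1) = (-1 : ZMod n) - (2 : ZMod n)⁻¹ * z := by
  have := Fact.mk hn
  have h2 : (2 : ZMod n) ≠ 0 := by
    exact_mod_cast ZMod.natCast_ne_zero_of_pos_of_lt two_pos (by omega)
  have h3 : (3 : ZMod n) ≠ 0 := by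
    exact_mod_cast ZMod.natCast_ne_zero_of_pos_of_lt three_pos (by omega)
  have hord_z := orderOf_add_one_of_sq_add_three_mul_add_three h3 hroot
  have hu : IsUnit (z + 1) := (orderOf_pos_iff.mp (by omega)).isUnit
  have hv : IsUnit ((2 : ZMod n)⁻¹ * z) := (orderOf_pos_iff.mp (by omega)).isUnit
  have hord_u : orderOf hu.unit = 3 := by rw [← orderOf_units, hu.unit_spec, hord_z]
  have hord_v : orderOf hv.unit = (n - 1) / 6 := by rw [← orderOf_units, hv.unit_spec, hord]
  have hord_w : orderOf (-1 : (ZMod n)ˣ) = 2 := by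
    rw [← orderOf_units, Units.val_neg, Units.val_one, orderOf_neg_one, ZMod.ringChar_zmod_n,
      if_neg (by omega)]
  have hcop := Nat.coprime_sub_one_div_six_six hmod
  refine ⟨hu.unit, hv.unit, -1, hu.unit_spec, hv.unit_spec, by simp, hord_u, hord_v, hord_w,
    isDirectProd3_of_coprime ?_ ?_ ?_ ?_, ?_⟩
  · rw [hord_u, hord_v]; exact (hcop.coprime_dvd_right (by norm_num)).symm
  · rw [hord_u, hord_w]; norm_num
  · rw [hord_v, hord_w]; exact hcop.coprime_dvd_right (by norm_num)
  · rw [hord_u, hord_v, hord_w, Nat.card_eq_fintype_card, ZMod.card_units]; omega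
  · field_simp; ring
end

section
/- Any 3AP decomposition of U_n for n prime, in which the three generators (forming an arithmetic progression in Z/nZ) have orders 2, 3 and (n−1)/6 in some order, arises in one of the following ways: the generators are, up to reversal of the progression, (x₂+1, −1, x₁) with ord(x₁) = (n−1)/6; or (2x₂+3, x₂+1, −1) with ord(2x₂+3) = (n−1)/6; or (x_i+1, 2⁻¹x_i, −1) with ord(2⁻¹x_i) = (n−1)/6; where x₁, x₂ are the roots of x² + 3x + 3 = 0 in Z/nZ, x₁ of odd order and x₂ of even order. -/
/-- The triple `(a, b, c)` in `ZMod n` matches one of the three constructions of a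
3AP decomposition with orders `2, 3, (n-1)/6`, in terms of the roots `x₁, x₂` of
`x² + 3x + 3 = 0`. -/
def Pattern (n : ℕ) (a b c x₁ x₂ : ZMod n) : Prop :=
  ((a, b, c) = (x₂ + 1, -1, x₁) ∧ orderOf x₁ = (n - 1) / 6) ∨
  ((a, b, c) = (2 * x₂ + 3, x₂ + 1, -1) ∧ orderOf (2 * x₂ + 3) = (n - 1) / 6) ∨
  (∃ x ∈ ({x₁, x₂} : Set (ZMod n)),
    (a, b, c) = (x + 1, (2 : ZMod n)⁻¹ * x, -1) ∧
    orderOf ((2 : ZMod n)⁻¹ * x) = (n - 1) / 6)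

/-! In `U_n` the element of order 2 is `-1` and an element `g` of order 3 satisfies
`g² + g + 1 = 0`, so `x := g - 1` is a root of `x² + 3x + 3`; the other root is `-3 - x`.
Since `n ≡ 3 (mod 4)`, an element has odd order iff it is a square, and `-1` is not a square;
as `-3 = (2x + 3)²` is one, `3` is not. The two roots multiply to `3`, so exactly one of them
has odd order: this is how `x₁` and `x₂` are told apart. The arithmetic progression then
expresses the remaining generator through `g`, according to which of the orders `2, 3, (n-1)/6`
sits in the middle. When it is `2`, the generator of order `(n-1)/6` is `-3 - x`, which has odd
order, so it is `x₁`. When it is `3`, the outer generator `a = 2g + 1` satisfies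
`(g - 1) a = 3 g²` with `a` a square, so `g - 1` is not a square and is `x₂`. -/

theorem Multiset.triple_eq_triple_iff {α : Type*} {a b c x y z : α} :
    ({a, b, c} : Multiset α) = {x, y, z} ↔
      (a = x ∧ b = y ∧ c = z) ∨ (a = x ∧ b = z ∧ c = y) ∨ (a = y ∧ b = x ∧ c = z) ∨
      (a = y ∧ b = z ∧ c = x) ∨ (a = z ∧ b = x ∧ c = y) ∨ (a = z ∧ b = y ∧ c = x) := by
  change ((([a, b, c] : List α)) : Multiset α) = [x, y, z] ↔ _
  rw [Multiset.coe_eq_coe, ← List.mem_permutations]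
  simp [List.permutations, List.permutationsAux, List.permutationsAux.rec]
  tauto

theorem eq_neg_one_of_orderOf_eq_two {R : Type*} [CommRing R] [NoZeroDivisors R] {x : R}
    (h : orderOf x = 2) : x = -1 :=
  (h ▸ IsPrimitiveRoot.orderOf x).eq_neg_one_of_two_right

theorem sq_add_self_add_one_eq_zero_of_orderOf_eq_three {R : Type*} [CommRing R] [IsDomain R]
    {x : R} (h : orderOf x = 3) : x ^ 2 + x + 1 = 0 := by
  have hx : IsPrimitiveRoot x 3 := h ▸ IsPrimitiveRoot.orderOf x
  simpa [Polynomial.cyclotomic_three] using hx.isRoot_cyclotomic (by norm_num)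

namespace FiniteField

variable {F : Type*} [Field F] [Fintype F]

theorem isSquare_mul_iff {x y : F} (hx : x ≠ 0) (hy : y ≠ 0) :
    IsSquare (x * y) ↔ (IsSquare x ↔ IsSquare y) := by
  classical
  rw [← quadraticChar_one_iff_isSquare hx, ← quadraticChar_one_iff_isSquare hy,
    ← quadraticChar_one_iff_isSquare (mul_ne_zero hx hy), map_mul]
  rcases quadraticChar_dichotomy hx with h | h <;> rcases quadraticChar_dichotomy hy with h' | h' <;>
    simp [h, h']

section CardModFour

variable (hF : Fintype.card F % 4 = 3)
include hF

theorem ringChar_ne_two_of_card_mod_four_eq_three : ringChar F ≠ 2 := by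
  rw [Ne, even_card_iff_char_two]
  omega

theorem odd_orderOf_iff_isSquare {x : F} (hx : x ≠ 0) : Odd (orderOf x) ↔ IsSquare x := by
  have hhalf : Odd (Fintype.card F / 2) := Nat.odd_iff.mpr (by omega)
  have hdvd : orderOf x ∣ 2 * (Fintype.card F / 2) := by
    rw [show 2 * (Fintype.card F / 2) = Fintype.card F - 1 by omega]
    exact orderOf_dvd_of_pow_eq_one (pow_card_sub_one_eq_one x hx)
  rw [isSquare_iff (ringChar_ne_two_of_card_mod_four_eq_three hF) hx,
    ← orderOf_dvd_iff_pow_eq_one]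
  exact ⟨fun h => h.coprime_two_right.dvd_of_dvd_mul_left hdvd, hhalf.of_dvd_nat⟩

variable (h3 : (3 : F) ≠ 0)
include h3

theorem not_isSquare_three {x : F} (hx : x ^ 2 + 3 * x + 3 = 0) : ¬IsSquare (3 : F) := by
  rintro ⟨t, ht⟩
  have ht0 : t ≠ 0 := by
    rintro rfl
    exact h3 (by simpa using ht)
  refine isSquare_neg_one_iff.mp ⟨(2 * x + 3) / t, ?_⟩ hF
  field_simp
  linear_combination (-4 : F) * hx + ht

theorem neg_three_sub_ne_self {x : F} (hx : x ^ 2 + 3 * x + 3 = 0) : -3 - x ≠ x := by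
  intro h
  exact not_isSquare_three hF h3 hx ⟨x, by linear_combination hx + x * h⟩

theorem odd_orderOf_neg_three_sub_iff {x : F} (hx : x ^ 2 + 3 * x + 3 = 0) :
    Odd (orderOf (-3 - x)) ↔ ¬Odd (orderOf x) := by
  have hmul : x * (-3 - x) = 3 := by linear_combination -hx
  have hx0 : x ≠ 0 := left_ne_zero_of_mul (hmul ▸ h3)
  have hy0 : -3 - x ≠ 0 := right_ne_zero_of_mul (hmul ▸ h3)
  have h := (isSquare_mul_iff hx0 hy0).not
  rw [hmul] at h
  rw [odd_orderOf_iff_isSquare hF hx0, odd_orderOf_iff_isSquare hF hy0]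
  have := h.mp (not_isSquare_three hF h3 hx)
  tauto

end CardModFour

end FiniteField

open FiniteField

section RootPair

variable {F : Type*} [Field F] [Fintype F]

def IsRootPair (x₁ x₂ : F) : Prop :=
  x₁ ^ 2 + 3 * x₁ + 3 = 0 ∧ x₂ ^ 2 + 3 * x₂ + 3 = 0 ∧ x₁ ≠ x₂ ∧
    Odd (orderOf x₁) ∧ Even (orderOf x₂)

variable (hF : Fintype.card F % 4 = 3) (h3 : (3 : F) ≠ 0) {x : F} (hx : x ^ 2 + 3 * x + 3 = 0)
include hF h3 hx

theorem isRootPair_of_odd (hodd : Odd (orderOf x)) : IsRootPair x (-3 - x) :=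
  ⟨hx, by linear_combination hx, (neg_three_sub_ne_self hF h3 hx).symm, hodd,
    Nat.not_odd_iff_even.mp fun h => (odd_orderOf_neg_three_sub_iff hF h3 hx).mp h hodd⟩

theorem isRootPair_of_even (heven : Even (orderOf x)) : IsRootPair (-3 - x) x :=
  ⟨by linear_combination hx, hx, neg_three_sub_ne_self hF h3 hx,
    (odd_orderOf_neg_three_sub_iff hF h3 hx).mpr (Nat.not_odd_iff_even.mpr heven), heven⟩

end RootPair

section Patterns

variable {p : ℕ} [Fact p.Prime]

def HasPattern (a b c : ZMod p) : Prop :=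
  ∃ x₁ x₂ : ZMod p, IsRootPair x₁ x₂ ∧ Pattern p a b c x₁ x₂

variable (hF : Fintype.card (ZMod p) % 4 = 3) (h3 : (3 : ZMod p) ≠ 0) {a b c : ZMod p}
include hF h3

theorem hasPattern_of_orderOf_three_two (ha : orderOf a = 3) (hb : orderOf b = 2)
    (hc : orderOf c = (p - 1) / 6) (hm : Odd ((p - 1) / 6)) (hAP : a + c = 2 * b) :
    HasPattern a b c := by
  have hb' := eq_neg_one_of_orderOf_eq_two hb
  have hc' : c = -2 - a := by linear_combination hAP + 2 * hb'
  have hroot : c ^ 2 + 3 * c + 3 = 0 := by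
    rw [hc']
    linear_combination sq_add_self_add_one_eq_zero_of_orderOf_eq_three ha
  refine ⟨c, -3 - c, isRootPair_of_odd hF h3 hroot (hc ▸ hm), .inl ⟨?_, hc⟩⟩
  simp only [Prod.ext_iff, hb', and_true]
  linear_combination hc'

theorem hasPattern_of_orderOf_m_three (ha : orderOf a = (p - 1) / 6) (hb : orderOf b = 3)
    (hc : orderOf c = 2) (hm : Odd ((p - 1) / 6)) (hAP : a + c = 2 * b) :
    HasPattern a b c := by
  have hb' := sq_add_self_add_one_eq_zero_of_orderOf_eq_three hb
  have hc' := eq_neg_one_of_orderOf_eq_two hc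
  have ha' : a = 2 * b + 1 := by linear_combination hAP - hc'
  have hroot : (b - 1) ^ 2 + 3 * (b - 1) + 3 = 0 := by linear_combination hb'
  have ha0 : a ≠ 0 := by
    rintro rfl
    simp [orderOf_zero, ← ha] at hm
  have hb0 : b ≠ 0 := by
    rintro rfl
    simp [orderOf_zero] at hb
  have hx0 : b - 1 ≠ 0 := by
    intro h
    exact h3 (by simpa [h] using hroot)
  have hsq : ¬IsSquare ((b - 1) * a) := by
    rw [show (b - 1) * a = 3 * b ^ 2 by rw [ha']; linear_combination -hb',
      isSquare_mul_iff h3 (pow_ne_zero 2 hb0), iff_true_right (IsSquare.sq b)]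
    exact not_isSquare_three hF h3 hroot
  have heven : Even (orderOf (b - 1)) := by
    rw [← Nat.not_odd_iff_even, odd_orderOf_iff_isSquare hF hx0]
    rw [isSquare_mul_iff hx0 ha0, ← odd_orderOf_iff_isSquare hF ha0, ha] at hsq
    tauto
  refine ⟨-3 - (b - 1), b - 1, isRootPair_of_even hF h3 hroot heven, .inr (.inl ⟨?_, ?_⟩)⟩
  · simp only [Prod.ext_iff, hc', and_true]
    exact ⟨by linear_combination ha', by ring⟩
  · rwa [show 2 * (b - 1) + 3 = a by linear_combination -ha']

theorem hasPattern_of_orderOf_three_m (ha : orderOf a = 3) (hb : orderOf b = (p - 1) / 6)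
    (hc : orderOf c = 2) (hAP : a + c = 2 * b) :
    HasPattern a b c := by
  have hc' := eq_neg_one_of_orderOf_eq_two hc
  have hroot : (a - 1) ^ 2 + 3 * (a - 1) + 3 = 0 := by
    linear_combination sq_add_self_add_one_eq_zero_of_orderOf_eq_three ha
  have hb' : (2 : ZMod p)⁻¹ * (a - 1) = b := by
    rw [inv_mul_eq_iff_eq_mul₀ (Ring.two_ne_zero (ringChar_ne_two_of_card_mod_four_eq_three hF))]
    linear_combination hAP - hc'
  have htriple : (a, b, c) = (a - 1 + 1, (2 : ZMod p)⁻¹ * (a - 1), -1) := by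
    rw [hb', hc', sub_add_cancel]
  rcases Nat.even_or_odd (orderOf (a - 1)) with heven | hodd
  · exact ⟨-3 - (a - 1), a - 1, isRootPair_of_even hF h3 hroot heven,
      .inr (.inr ⟨a - 1, .inr rfl, htriple, hb' ▸ hb⟩)⟩
  · exact ⟨a - 1, -3 - (a - 1), isRootPair_of_odd hF h3 hroot hodd,
      .inr (.inr ⟨a - 1, .inl rfl, htriple, hb' ▸ hb⟩)⟩

end Patterns

theorem stmt8_general (n : ℕ) (hn : n.Prime) (hmod : n % 36 = 7 ∨ n % 36 = 31)
    (a b c : (ZMod n)ˣ)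
    (hAP : (b : ZMod n) - (a : ZMod n) = (c : ZMod n) - (b : ZMod n))
    (hords : ({orderOf a, orderOf b, orderOf c} : Multiset ℕ) = {2, 3, (n - 1) / 6}) :
    ∃ x₁ x₂ : ZMod n,
      x₁ ^ 2 + 3 * x₁ + 3 = 0 ∧ x₂ ^ 2 + 3 * x₂ + 3 = 0 ∧ x₁ ≠ x₂ ∧
      Odd (orderOf x₁) ∧ Even (orderOf x₂) ∧
      (Pattern n (a : ZMod n) (b : ZMod n) (c : ZMod n) x₁ x₂ ∨
       Pattern n (c : ZMod n) (b : ZMod n) (a : ZMod n) x₁ x₂) := by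
  have := Fact.mk hn
  have hF : Fintype.card (ZMod n) % 4 = 3 := by rw [ZMod.card]; omega
  have h3 : (3 : ZMod n) ≠ 0 := by
    rw [Ne, ← Nat.cast_ofNat, ZMod.natCast_eq_zero_iff]
    intro h
    have := Nat.le_of_dvd (by norm_num) h
    omega
  have hm : Odd ((n - 1) / 6) := Nat.odd_iff.mpr (by omega)
  have hAC : (a : ZMod n) + c = 2 * b := by linear_combination -hAP
  have hCA : (c : ZMod n) + a = 2 * b := by linear_combination -hAP
  rw [← orderOf_units, ← orderOf_units, ← orderOf_units, Multiset.triple_eq_triple_iff] at hords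
  have key : HasPattern (a : ZMod n) b c ∨ HasPattern (c : ZMod n) b a := by
    rcases hords with ⟨ha, hb, hc⟩ | ⟨ha, hb, hc⟩ | ⟨ha, hb, hc⟩ | ⟨ha, hb, hc⟩ | ⟨ha, hb, hc⟩ |
      ⟨ha, hb, hc⟩
    · exact .inr (hasPattern_of_orderOf_m_three hF h3 hc hb ha hm hCA)
    · exact .inr (hasPattern_of_orderOf_three_m hF h3 hc hb ha hCA)
    · exact .inl (hasPattern_of_orderOf_three_two hF h3 ha hb hc hm hAC)
    · exact .inl (hasPattern_of_orderOf_three_m hF h3 ha hb hc hAC)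
    · exact .inr (hasPattern_of_orderOf_three_two hF h3 hc hb ha hm hCA)
    · exact .inl (hasPattern_of_orderOf_m_three hF h3 ha hb hc hm hAC)
  rcases key with ⟨x₁, x₂, ⟨h₁, h₂, hne, hodd, heven⟩, hpat⟩ |
    ⟨x₁, x₂, ⟨h₁, h₂, hne, hodd, heven⟩, hpat⟩
  · exact ⟨x₁, x₂, h₁, h₂, hne, hodd, heven, .inl hpat⟩
  · exact ⟨x₁, x₂, h₁, h₂, hne, hodd, heven, .inr hpat⟩

theorem stmt8 (n : ℕ) (hn : n.Prime) (hmod : n % 36 = 7 ∨ n % 36 = 31)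
    (a b c : (ZMod n)ˣ)
    (hAP : (b : ZMod n) - (a : ZMod n) = (c : ZMod n) - (b : ZMod n))
    (hdp : IsDirectProd3 a b c)
    (hords : ({orderOf a, orderOf b, orderOf c} : Multiset ℕ) = {2, 3, (n - 1) / 6}) :
    ∃ x₁ x₂ : ZMod n,
      x₁ ^ 2 + 3 * x₁ + 3 = 0 ∧ x₂ ^ 2 + 3 * x₂ + 3 = 0 ∧ x₁ ≠ x₂ ∧
      Odd (orderOf x₁) ∧ Even (orderOf x₂) ∧
      (Pattern n (a : ZMod n) (b : ZMod n) (c : ZMod n) x₁ x₂ ∨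
       Pattern n (c : ZMod n) (b : ZMod n) (a : ZMod n) x₁ x₂) :=
  stmt8_general n hn hmod a b c hAP hords
end

section
/- Let n be a prime with n ≡ 13, 61, 85 or 133 (mod 144), n > 13. Suppose x ∈ Z/nZ satisfies x² + 3x + 3 = 0 and there exists k ∈ Z/nZ with ord_n(x+1+k) = 4 and ord_n(x+1+2k) = (n−1)/12. Then U_n is the internal direct product ⟨x+1⟩ × ⟨x+1+k⟩ × ⟨x+1+2k⟩ of cyclic groups of orders 3, 4, and (n−1)/12, with generators in arithmetic progression. -/
open Subgroup

lemma eq_one_of_dvd_coprime {G : Type*} [Group G] {g : G} {a b : ℕ}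
    (h : Nat.Coprime a b) (ha : orderOf g ∣ a) (hb : orderOf g ∣ b) : g = 1 :=
  orderOf_eq_one_iff.mp (Nat.eq_one_of_dvd_one (h ▸ Nat.dvd_gcd ha hb))

lemma triple_inj {G : Type*} [CommGroup G] (u v w : G)
    (h12 : Nat.Coprime (orderOf u) (orderOf v))
    (h13 : Nat.Coprime (orderOf u) (orderOf w))
    (h23 : Nat.Coprime (orderOf v) (orderOf w)) :
    Function.Injective
      (fun p : (zpowers u) × (zpowers v) × (zpowers w) =>
        (p.1 : G) * (p.2.1 : G) * (p.2.2 : G)) := by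
  intro p q h
  simp only at h
  have m1 : (p.1 : G) * (q.1 : G)⁻¹ ∈ zpowers u := mul_mem p.1.2 (inv_mem q.1.2)
  have m2 : (p.2.1 : G) * (q.2.1 : G)⁻¹ ∈ zpowers v := mul_mem p.2.1.2 (inv_mem q.2.1.2)
  have m3 : (p.2.2 : G) * (q.2.2 : G)⁻¹ ∈ zpowers w := mul_mem p.2.2.2 (inv_mem q.2.2.2)
  set a1 : G := (p.1 : G); set a2 : G := (p.2.1 : G); set a3 : G := (p.2.2 : G)
  set b1 : G := (q.1 : G); set b2 : G := (q.2.1 : G); set b3 : G := (q.2.2 : G)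
  set g1 := a1 * b1⁻¹ with hg1def
  set g2 := a2 * b2⁻¹ with hg2def
  set g3 := a3 * b3⁻¹ with hg3def
  have key : g1 * g2 * g3 = 1 := by
    have hh : a1 * a2 * a3 = b1 * b2 * b3 := h
    rw [hg1def, hg2def, hg3def,
      show a1 * b1⁻¹ * (a2 * b2⁻¹) * (a3 * b3⁻¹)
        = (a1 * a2 * a3) * (b1 * b2 * b3)⁻¹ by
        simp [mul_comm, mul_assoc, mul_left_comm], hh, mul_inv_cancel]
  have d1 : orderOf g1 ∣ orderOf u := orderOf_dvd_of_mem_zpowers m1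
  have d2 : orderOf g2 ∣ orderOf v := orderOf_dvd_of_mem_zpowers m2
  have d3 : orderOf g3 ∣ orderOf w := orderOf_dvd_of_mem_zpowers m3
  have e1 : g1 = 1 := by
    have e : g1 = (g2 * g3)⁻¹ := by
      rw [eq_inv_iff_mul_eq_one, ← mul_assoc]; exact key
    have dvw : orderOf g1 ∣ orderOf v * orderOf w := by
      rw [e, orderOf_inv]
      exact ((Commute.all g2 g3).orderOf_mul_dvd_lcm).trans
        (Nat.lcm_dvd (d2.mul_right _) (d3.mul_left _))
    exact eq_one_of_dvd_coprime (Nat.Coprime.mul_right h12 h13) d1 dvw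
  have key2 : g2 * g3 = 1 := by rw [e1, one_mul] at key; exact key
  have e2 : g2 = 1 := by
    have e : g2 = g3⁻¹ := by rw [eq_inv_iff_mul_eq_one]; exact key2
    exact eq_one_of_dvd_coprime h23 d2 (by rw [e, orderOf_inv]; exact d3)
  have e3 : g3 = 1 := by rw [e2, one_mul] at key2; exact key2
  have q1 : a1 = b1 := by rwa [hg1def, mul_inv_eq_one] at e1
  have q2 : a2 = b2 := by rwa [hg2def, mul_inv_eq_one] at e2
  have q3 : a3 = b3 := by rwa [hg3def, mul_inv_eq_one] at e3
  exact Prod.ext (Subtype.ext q1) (Prod.ext (Subtype.ext q2) (Subtype.ext q3))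

theorem stmt9 (n : ℕ) (hn : n.Prime)
    (hmod : n % 144 = 13 ∨ n % 144 = 61 ∨ n % 144 = 85 ∨ n % 144 = 133) (hgt : 13 < n)
    (x k : ZMod n) (hroot : x ^ 2 + 3 * x + 3 = 0)
    (hk4 : orderOf (x + 1 + k) = 4) (hkm : orderOf (x + 1 + 2 * k) = (n - 1) / 12) :
    ∃ u v w : (ZMod n)ˣ,
      (u : ZMod n) = x + 1 ∧ (v : ZMod n) = x + 1 + k ∧ (w : ZMod n) = x + 1 + 2 * k ∧
      orderOf u = 3 ∧ orderOf v = 4 ∧ orderOf w = (n - 1) / 12 ∧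
      IsDirectProd3 u v w := by
  haveI := Fact.mk hn
  set m := (n - 1) / 12 with hm
  -- arithmetic facts
  have h12m : 12 * m = n - 1 := by rcases hmod with h | h | h | h <;> omega
  have hm12 : m % 12 = 1 ∨ m % 12 = 5 ∨ m % 12 = 7 ∨ m % 12 = 11 := by
    rcases hmod with h | h | h | h <;> omega
  have hmne : m ≠ 0 := by omega
  have hc3m : Nat.Coprime 3 m :=
    (Nat.Prime.coprime_iff_not_dvd (by norm_num)).mpr (fun hd => by
      have := Nat.mod_eq_zero_of_dvd hd; omega)
  have hc2m : Nat.Coprime 2 m :=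
    (Nat.Prime.coprime_iff_not_dvd Nat.prime_two).mpr (fun hd => by
      have := Nat.mod_eq_zero_of_dvd hd; omega)
  have hc4m : Nat.Coprime 4 m := by
    have := Nat.Coprime.pow_left 2 hc2m; norm_num at this; exact this
  -- 3 ≠ 0 in ZMod n
  have h3ne : (3 : ZMod n) ≠ 0 := by
    intro h
    have : ((3 : ℕ) : ZMod n) = 0 := by push_cast; exact h
    rw [ZMod.natCast_eq_zero_iff] at this
    have := Nat.le_of_dvd (by norm_num) this
    omega
  have hx0 : x ≠ 0 := by
    intro h; rw [h] at hroot; norm_num at hroot; exact h3ne hroot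
  -- x+1 cubes to 1
  have hcube : (x + 1) ^ 3 = 1 := by linear_combination x * hroot
  have hune1 : x + 1 ≠ 1 := by
    intro h; apply hx0; linear_combination h
  haveI : Fact (Nat.Prime 3) := ⟨by norm_num⟩
  have hord3 : orderOf (x + 1) = 3 := orderOf_eq_prime hcube hune1
  have hu : IsUnit (x + 1) := IsUnit.of_pow_eq_one hcube (by norm_num)
  have hv : IsUnit (x + 1 + k) :=
    IsUnit.of_pow_eq_one (n := 4) (by rw [← hk4]; exact pow_orderOf_eq_one _) (by norm_num)
  have hw : IsUnit (x + 1 + 2 * k) :=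
    IsUnit.of_pow_eq_one (n := m) (by rw [← hkm]; exact pow_orderOf_eq_one _) hmne
  have ou : orderOf hu.unit = 3 := by rw [← orderOf_units, hu.unit_spec]; exact hord3
  have ov : orderOf hv.unit = 4 := by rw [← orderOf_units, hv.unit_spec]; exact hk4
  have ow : orderOf hw.unit = m := by rw [← orderOf_units, hw.unit_spec]; exact hkm
  refine ⟨hu.unit, hv.unit, hw.unit, hu.unit_spec, hv.unit_spec, hw.unit_spec, ou, ov, ow, ?_⟩
  rw [IsDirectProd3, Fintype.bijective_iff_injective_and_card]
  constructor
  · exact triple_inj _ _ _ (by rw [ou, ov]; norm_num) (by rw [ou, ow]; exact hc3m)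
      (by rw [ov, ow]; exact hc4m)
  · rw [Fintype.card_prod, Fintype.card_prod, Fintype.card_zpowers, Fintype.card_zpowers,
      Fintype.card_zpowers, ou, ov, ow, ZMod.card_units]
    omega
end

section
/- There is no expression of the group of units of Z/(3p) as an internal direct product ⟨a⟩ × ⟨a+d⟩ × ⟨a+2d⟩ of three nontrivial cyclic subgroups with generators in arithmetic progression, for any prime p > 3. -/
/-- In a finite group, an element of even order has an element of order 2 in its
cyclic subgroup. -/
lemma aux_exists_sq_one {G : Type*} [Group G] [Finite G] (g : G)
    (h2 : 2 ∣ orderOf g) : ∃ u ∈ Subgroup.zpowers g, u ^ 2 = 1 ∧ u ≠ 1 := by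
  have hmpos : 0 < orderOf g := orderOf_pos g
  have hm2 : 2 ≤ orderOf g := Nat.le_of_dvd hmpos h2
  refine ⟨g ^ (orderOf g / 2), Subgroup.pow_mem _ (Subgroup.mem_zpowers g) _, ?_, ?_⟩
  · rw [← pow_mul, Nat.div_mul_cancel h2, pow_orderOf_eq_one]
  · intro h
    have hd := orderOf_dvd_of_pow_eq_one h
    have hlt : orderOf g / 2 < orderOf g := Nat.div_lt_self hmpos (by norm_num)
    have hpos : 0 < orderOf g / 2 := Nat.div_pos hm2 (by norm_num)
    have := Nat.le_of_dvd hpos hd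
    omega

lemma aux_cond_inj {G : Type*} [Group G] (g : G) (hg : g ≠ 1) (b b' : Bool)
    (h : (cond b g 1 : G) = cond b' g 1) : b = b' := by
  cases b <;> cases b' <;> simp_all

theorem stmt10 (p : ℕ) (hp : p.Prime) (hgt : 3 < p) :
    ¬ ∃ (x y z : (ZMod (3 * p))ˣ) (a d : ZMod (3 * p)),
      (x : ZMod (3 * p)) = a ∧ (y : ZMod (3 * p)) = a + d ∧
      (z : ZMod (3 * p)) = a + 2 * d ∧
      x ≠ 1 ∧ y ≠ 1 ∧ z ≠ 1 ∧ IsDirectProd3 x y z := by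
  rintro ⟨x, y, z, a, d, hx, hy, hz, hx1, hy1, hz1, hbij⟩
  haveI : Fact p.Prime := ⟨hp⟩
  haveI : Fact (2 < p) := ⟨by omega⟩
  have hp0 : 0 < p := hp.pos
  haveI : NeZero (3 * p) := ⟨by positivity⟩
  set f3 : ZMod (3 * p) →+* ZMod 3 := ZMod.castHom ⟨p, rfl⟩ (ZMod 3) with hf3
  set fp : ZMod (3 * p) →+* ZMod p := ZMod.castHom ⟨3, mul_comm 3 p⟩ (ZMod p) with hfp
  -- the casts of the unit values are nonzero mod 3
  have hux : f3 a ≠ 0 := by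
    rw [← hx]
    exact (x.isUnit.map f3).ne_zero
  have huy : f3 a + f3 d ≠ 0 := by
    have : f3 (y : ZMod (3 * p)) ≠ 0 := (y.isUnit.map f3).ne_zero
    rwa [hy, map_add] at this
  have huz : f3 a + 2 * f3 d ≠ 0 := by
    have : f3 (z : ZMod (3 * p)) ≠ 0 := (z.isUnit.map f3).ne_zero
    rwa [hz, map_add, map_mul, map_ofNat] at this
  have hd3 : f3 d = 0 := by
    revert hux huy huz
    generalize f3 a = A; generalize f3 d = D
    revert A D; decide
  -- combined injectivity mod 3 and mod p
  have hinj : ∀ α β : ZMod (3 * p), f3 α = f3 β → fp α = fp β → α = β := by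
    intro α β h1 h2
    have key : ∀ γ : ZMod (3 * p), f3 γ = 0 → fp γ = 0 → γ = 0 := by
      intro γ hg3 hgp
      have hγ : ((γ.val : ℕ) : ZMod (3 * p)) = γ := ZMod.natCast_rightInverse γ
      rw [← hγ] at hg3 hgp
      rw [map_natCast] at hg3 hgp
      have h3 : 3 ∣ γ.val := (ZMod.natCast_eq_zero_iff _ _).mp hg3
      have hpd : p ∣ γ.val := (ZMod.natCast_eq_zero_iff _ _).mp hgp
      have hcop : Nat.Coprime 3 p := (Nat.coprime_primes (by norm_num) hp).mpr (by omega)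
      have : 3 * p ∣ γ.val := hcop.mul_dvd_of_dvd_of_dvd h3 hpd
      rw [← hγ, (ZMod.natCast_eq_zero_iff _ _).mpr this]
    have := key (α - β) (by rw [map_sub, h1, sub_self]) (by rw [map_sub, h2, sub_self])
    linear_combination this
  -- the unit-level map mod 3
  set F : (ZMod (3 * p))ˣ →* (ZMod 3)ˣ := Units.map (f3 : ZMod (3 * p) →* ZMod 3) with hF
  have hFx : (F x : ZMod 3) = f3 a := by rw [hF, Units.coe_map]; simp [hx]
  have hFy : (F y : ZMod 3) = f3 a := by
    rw [hF, Units.coe_map]; simp [hy, map_add, hd3]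
  have hFz : (F z : ZMod 3) = f3 a := by
    rw [hF, Units.coe_map]; simp [hz, map_add, map_mul, hd3]
  have hA : f3 a = 1 ∨ f3 a = -1 := by
    revert hux; generalize f3 a = A; revert A; decide
  rcases hA with hA | hA
  · -- all generators ≡ 1 mod 3: the image misses -1
    have hone : ∀ g : (ZMod (3 * p))ˣ, F g = 1 →
        ∀ u ∈ Subgroup.zpowers g, F u = 1 := by
      rintro g hg u ⟨k, rfl⟩
      rw [map_zpow, hg, one_zpow]
    obtain ⟨⟨⟨u, hu⟩, ⟨v, hv⟩, ⟨w, hw⟩⟩, heq⟩ := hbij.2 (-1 : (ZMod (3 * p))ˣ)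
    simp only at heq
    have hFu : F u = 1 := hone x (Units.ext (by rw [hFx, hA, Units.val_one])) u hu
    have hFv : F v = 1 := hone y (Units.ext (by rw [hFy, hA, Units.val_one])) v hv
    have hFw : F w = 1 := hone z (Units.ext (by rw [hFz, hA, Units.val_one])) w hw
    have : F (u * v * w) = 1 := by rw [map_mul, map_mul, hFu, hFv, hFw, mul_one, mul_one]
    rw [heq] at this
    have hval : ((F (-1) : (ZMod 3)ˣ) : ZMod 3) = -1 := by
      rw [hF, Units.coe_map]
      simp [Units.val_neg]
    rw [this] at hval
    simp at hval
    exact (by decide : (-1 : ZMod 3) ≠ 1) hval.symm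
  · -- all generators ≡ -1 mod 3: torsion counting
    have hneg1 : (-1 : (ZMod 3)ˣ) ≠ 1 := by
      intro h
      have := congrArg Units.val h
      simp only [Units.val_neg, Units.val_one] at this
      exact (by decide : (-1 : ZMod 3) ≠ 1) this
    have heven : ∀ g : (ZMod (3 * p))ˣ, (F g : ZMod 3) = -1 → 2 ∣ orderOf g := by
      intro g hg
      have hF1 : (F g) ^ orderOf g = 1 := by rw [← map_pow, pow_orderOf_eq_one, map_one]
      have hFg : F g = -1 := Units.ext (by rw [hg, Units.val_neg, Units.val_one])
      rcases Nat.even_or_odd (orderOf g) with he | ho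
      · exact he.two_dvd
      · exfalso
        rw [hFg, ho.neg_one_pow] at hF1
        exact hneg1 hF1
    obtain ⟨u, hu, hu2, hu1⟩ := aux_exists_sq_one x (heven x (hFx.trans hA))
    obtain ⟨v, hv, hv2, hv1⟩ := aux_exists_sq_one y (heven y (hFy.trans hA))
    obtain ⟨w, hw, hw2, hw1⟩ := aux_exists_sq_one z (heven z (hFz.trans hA))
    -- 8 distinct square roots of 1
    set S := {g : (ZMod (3 * p))ˣ // g ^ 2 = 1} with hS
    have hsq : ∀ b : Bool, ∀ g : (ZMod (3 * p))ˣ, g ^ 2 = 1 → (cond b g 1) ^ 2 = 1 := by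
      intro b g hg; cases b <;> simp [hg]
    have φprop : ∀ t : Bool × Bool × Bool,
        ((cond t.1 u 1) * (cond t.2.1 v 1) * (cond t.2.2 w 1)) ^ 2 = 1 := by
      intro ⟨i, j, k⟩
      rw [mul_pow, mul_pow, hsq i u hu2, hsq j v hv2, hsq k w hw2, mul_one, mul_one]
    set φ : Bool × Bool × Bool → S := fun t =>
      ⟨(cond t.1 u 1) * (cond t.2.1 v 1) * (cond t.2.2 w 1), φprop t⟩ with hφ
    have condmem : ∀ (b : Bool) (g h : (ZMod (3 * p))ˣ), h ∈ Subgroup.zpowers g →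
        cond b h 1 ∈ Subgroup.zpowers g := by
      intro b g h hh; cases b
      · exact Subgroup.one_mem _
      · exact hh
    have hφinj : Function.Injective φ := by
      rintro ⟨i, j, k⟩ ⟨i', j', k'⟩ he
      have he' : ((cond i u 1) * (cond j v 1) * (cond k w 1) : (ZMod (3 * p))ˣ)
          = (cond i' u 1) * (cond j' v 1) * (cond k' w 1) := congrArg Subtype.val he
      have hinj2 := hbij.1 (a₁ := (⟨cond i u 1, condmem i x u hu⟩,
          ⟨cond j v 1, condmem j y v hv⟩, ⟨cond k w 1, condmem k z w hw⟩))
        (a₂ := (⟨cond i' u 1, condmem i' x u hu⟩,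
          ⟨cond j' v 1, condmem j' y v hv⟩, ⟨cond k' w 1, condmem k' z w hw⟩))
        (by simpa using he')
      have e1 : (cond i u 1 : (ZMod (3 * p))ˣ) = cond i' u 1 :=
        congrArg Subtype.val (congrArg Prod.fst hinj2)
      have e2 : (cond j v 1 : (ZMod (3 * p))ˣ) = cond j' v 1 :=
        congrArg Subtype.val (congrArg Prod.fst (congrArg Prod.snd hinj2))
      have e3 : (cond k w 1 : (ZMod (3 * p))ˣ) = cond k' w 1 :=
        congrArg Subtype.val (congrArg Prod.snd (congrArg Prod.snd hinj2))
      rw [aux_cond_inj u hu1 i i' e1, aux_cond_inj v hv1 j j' e2,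
        aux_cond_inj w hw1 k k' e3]
    -- at most 4 square roots of 1
    set χ : S → Bool × Bool := fun g =>
      (decide (f3 ((g : (ZMod (3 * p))ˣ) : ZMod (3 * p)) = 1),
       decide (fp ((g : (ZMod (3 * p))ˣ) : ZMod (3 * p)) = 1)) with hχ
    have hval2 : ∀ g : S, ((g : (ZMod (3 * p))ˣ) : ZMod (3 * p)) ^ 2 = 1 := by
      intro g
      have := congrArg Units.val g.2
      simpa using this
    have hdich3 : ∀ g : S, f3 ((g : (ZMod (3 * p))ˣ) : ZMod (3 * p)) = 1 ∨
        f3 ((g : (ZMod (3 * p))ˣ) : ZMod (3 * p)) = -1 := by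
      intro g
      have h := congrArg f3 (hval2 g)
      rw [map_pow, map_one, sq] at h
      exact mul_self_eq_one_iff.mp h
    have hdichp : ∀ g : S, fp ((g : (ZMod (3 * p))ˣ) : ZMod (3 * p)) = 1 ∨
        fp ((g : (ZMod (3 * p))ˣ) : ZMod (3 * p)) = -1 := by
      intro g
      have h := congrArg fp (hval2 g)
      rw [map_pow, map_one, sq] at h
      exact mul_self_eq_one_iff.mp h
    have hχinj : Function.Injective χ := by
      intro g h he
      rw [hχ] at he
      obtain ⟨he1, he2⟩ := Prod.mk.injEq .. ▸ he
      have n3 : (-1 : ZMod 3) ≠ 1 := by decide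
      have np : (-1 : ZMod p) ≠ 1 := ZMod.neg_one_ne_one
      have c3 : f3 ((g : (ZMod (3 * p))ˣ) : ZMod (3 * p))
          = f3 ((h : (ZMod (3 * p))ˣ) : ZMod (3 * p)) := by
        rcases hdich3 g with hg | hg <;> rcases hdich3 h with hh | hh <;>
          simp [hg, hh, n3] at he1 ⊢
      have cp : fp ((g : (ZMod (3 * p))ˣ) : ZMod (3 * p))
          = fp ((h : (ZMod (3 * p))ˣ) : ZMod (3 * p)) := by
        rcases hdichp g with hg | hg <;> rcases hdichp h with hh | hh <;>
          simp [hg, hh, np] at he2 ⊢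
      have := hinj _ _ c3 cp
      exact Subtype.ext (Units.ext this)
    have h8 : (8 : ℕ) ≤ Fintype.card S := by
      have := Fintype.card_le_of_injective φ hφinj
      simpa using this
    have h4 : Fintype.card S ≤ 4 := by
      have := Fintype.card_le_of_injective χ hχinj
      simpa using this
    omega
end

section
/- For any positive integer m, there is no internal direct product decomposition U_{3m} = ⟨a⟩ × ⟨a+m⟩ × ⟨a+2m⟩ of the group of units of Z/3m with the three generators in arithmetic progression with common difference m. -/
theorem stmt11 (m : ℕ) (hm : 0 < m) :
    ¬ ∃ (x y z : (ZMod (3 * m))ˣ) (a : ZMod (3 * m)),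
      (x : ZMod (3 * m)) = a ∧ (y : ZMod (3 * m)) = a + (m : ZMod (3 * m)) ∧
      (z : ZMod (3 * m)) = a + 2 * (m : ZMod (3 * m)) ∧ IsDirectProd3 x y z := by
  rintro ⟨x, y, z, a, hx, hy, hz, hbij⟩
  haveI : NeZero m := ⟨hm.ne'⟩
  haveI : NeZero (3 * m) := ⟨by positivity⟩
  have hmd : m ∣ 3 * m := dvd_mul_left m 3
  set f := ZMod.unitsMap hmd with hf
  have hcast : ∀ u : (ZMod (3 * m))ˣ,
      (f u : ZMod m) = ZMod.castHom hmd (ZMod m) (u : ZMod (3 * m)) := fun u => rfl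
  have hm0 : (ZMod.castHom hmd (ZMod m)) ((m : ZMod (3 * m))) = 0 := by
    simp
  have hyx : f y = f x := by
    ext
    rw [hcast, hcast, hy, hx, map_add, hm0, add_zero]
  have hzx : f z = f x := by
    ext
    rw [hcast, hcast, hz, hx, map_add, map_mul, hm0, mul_zero, add_zero]
  have hgen : ∀ u : (ZMod m)ˣ, u ∈ Subgroup.zpowers (f x) := by
    intro u
    obtain ⟨v, hv⟩ := ZMod.unitsMap_surjective hmd u
    obtain ⟨p, hp⟩ := hbij.2 v
    obtain ⟨i, hi⟩ := Subgroup.mem_zpowers_iff.mp p.1.2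
    obtain ⟨j, hj⟩ := Subgroup.mem_zpowers_iff.mp p.2.1.2
    obtain ⟨k, hk⟩ := Subgroup.mem_zpowers_iff.mp p.2.2.2
    refine Subgroup.mem_zpowers_iff.mpr ⟨i + j + k, ?_⟩
    simp only at hp
    rw [← hv, ← hp, ← hi, ← hj, ← hk, map_mul, map_mul, map_zpow, map_zpow, map_zpow,
      hyx, hzx, ← zpow_add, ← zpow_add]
  have hordfx : orderOf (f x) = Nat.totient m := by
    have h := orderOf_eq_card_of_forall_mem_zpowers hgen
    rwa [Nat.card_eq_fintype_card, ZMod.card_units_eq_totient] at h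
  set t := Nat.totient m with ht
  have ht1 : 0 < t := Nat.totient_pos.mpr hm
  have hdx : t ≤ orderOf x :=
    Nat.le_of_dvd (orderOf_pos x) (hordfx ▸ orderOf_map_dvd f x)
  have hdy : t ≤ orderOf y := by
    have := orderOf_map_dvd f y
    rw [hyx, hordfx] at this
    exact Nat.le_of_dvd (orderOf_pos y) this
  have hdz : t ≤ orderOf z := by
    have := orderOf_map_dvd f z
    rw [hzx, hordfx] at this
    exact Nat.le_of_dvd (orderOf_pos z) this
  have hcard : orderOf x * (orderOf y * orderOf z) = Nat.totient (3 * m) := by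
    have h := Nat.card_eq_of_bijective _ hbij
    simpa [Nat.card_prod, Nat.card_zpowers, Nat.card_eq_fintype_card,
      ZMod.card_units_eq_totient, Fintype.card_zpowers, mul_assoc] using h
  have htot : Nat.totient (3 * m) ≤ 3 * t := by
    by_cases h3 : 3 ∣ m
    · rw [Nat.totient_mul_of_prime_of_dvd (by norm_num) h3]
    · rw [Nat.totient_mul ((Nat.prime_three.coprime_iff_not_dvd).mpr h3),
        show Nat.totient 3 = 2 from rfl]
      omega
  have hbound : t * (t * t) ≤ 3 * t := by
    calc t * (t * t) ≤ orderOf x * (orderOf y * orderOf z) :=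
          Nat.mul_le_mul hdx (Nat.mul_le_mul hdy hdz)
      _ = Nat.totient (3 * m) := hcard
      _ ≤ 3 * t := htot
  have ht' : t = 1 := by nlinarith
  have hm12 : m = 1 ∨ m = 2 := Nat.totient_eq_one_iff.mp ht'
  -- transport to ZMod 3
  have h3d : (3 : ℕ) ∣ 3 * m := dvd_mul_right 3 m
  set g := ZMod.castHom h3d (ZMod 3) with hg
  have hua : IsUnit (g a) := by rw [← hx]; exact (x.isUnit).map g
  have hub : IsUnit (g a + (m : ZMod 3)) := by
    have := (y.isUnit).map g
    rwa [hy, map_add, map_natCast] at this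
  have huc : IsUnit (g a + 2 * (m : ZMod 3)) := by
    have := (z.isUnit).map g
    rwa [hz, map_add, map_mul, map_natCast, map_ofNat] at this
  have key : ∀ c : ZMod 3, c = 0 ∨ c + 1 = 0 ∨ c + 2 = 0 := by decide
  rcases hm12 with rfl | rfl
  · have h1 : ((1 : ℕ) : ZMod 3) = 1 := by decide
    rw [h1] at hub
    rw [h1] at huc
    rw [show (2 : ZMod 3) * 1 = 2 from rfl] at huc
    rcases key (g a) with h | h | h
    · exact not_isUnit_zero (h ▸ hua)
    · exact not_isUnit_zero (h ▸ hub)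
    · exact not_isUnit_zero (h ▸ huc)
  · have h2 : ((2 : ℕ) : ZMod 3) = 2 := by decide
    rw [h2] at hub
    rw [h2] at huc
    have h4 : (2 : ZMod 3) * 2 = 1 := by decide
    rw [h4] at huc
    rcases key (g a) with h | h | h
    · exact not_isUnit_zero (h ▸ hua)
    · exact not_isUnit_zero (h ▸ huc)
    · exact not_isUnit_zero (h ▸ hub)
end

section
/- Let p, q be primes greater than 3 with p ≡ 3 (mod 4), ord_p(−3) = (p−1)/2 and ord_q(−3) = q−1, and let n = pq. Let x ∈ Z/nZ be the unique element with x ≡ 1 (mod p) and x ≡ −3 (mod q). Then U_n is the internal direct product ⟨−x−2⟩ × ⟨−1⟩ × ⟨x⟩ of cyclic subgroups of orders (p−1)/2, 2, and q−1, and the generators −x−2, −1, x are in arithmetic progression in Z/nZ. -/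
lemma inj_aux3 {G : Type*} [CommGroup G] {u v w : G}
    (h : ∀ i j k : ℤ, u ^ i * v ^ j * w ^ k = 1 → u ^ i = 1 ∧ v ^ j = 1 ∧ w ^ k = 1) :
    Function.Injective
      (fun p : (Subgroup.zpowers u) × (Subgroup.zpowers v) × (Subgroup.zpowers w) =>
        (p.1 : G) * (p.2.1 : G) * (p.2.2 : G)) := by
  rintro ⟨⟨a, ha⟩, ⟨b, hb⟩, ⟨c, hc⟩⟩ ⟨⟨a', ha'⟩, ⟨b', hb'⟩, ⟨c', hc'⟩⟩ heq
  simp only at heq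
  obtain ⟨i, rfl⟩ := Subgroup.mem_zpowers_iff.mp ha
  obtain ⟨j, rfl⟩ := Subgroup.mem_zpowers_iff.mp hb
  obtain ⟨k, rfl⟩ := Subgroup.mem_zpowers_iff.mp hc
  obtain ⟨i', rfl⟩ := Subgroup.mem_zpowers_iff.mp ha'
  obtain ⟨j', rfl⟩ := Subgroup.mem_zpowers_iff.mp hb'
  obtain ⟨k', rfl⟩ := Subgroup.mem_zpowers_iff.mp hc'
  have key : u ^ (i - i') * v ^ (j - j') * w ^ (k - k') = 1 := by
    have h2 : (u ^ i * v ^ j * w ^ k) * (u ^ i' * v ^ j' * w ^ k')⁻¹ = 1 := by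
      rw [heq, mul_inv_cancel]
    rw [← h2, zpow_sub, zpow_sub, zpow_sub, mul_inv_rev, mul_inv_rev]
    simp only [mul_comm, mul_assoc, mul_left_comm]
  obtain ⟨h1, h2, h3⟩ := h _ _ _ key
  rw [zpow_sub, mul_inv_eq_one] at h1 h2 h3
  exact Prod.ext (Subtype.ext h1) (Prod.ext (Subtype.ext h2) (Subtype.ext h3))

theorem stmt12_aux (p q : ℕ) (hp : p.Prime) (hq : q.Prime) (hp3 : 3 < p) (hq3 : 3 < q)
    (hp4 : p % 4 = 3)
    (hordp : orderOf (-3 : ZMod p) = (p - 1) / 2) (hordq : orderOf (-3 : ZMod q) = q - 1)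
    (x : ZMod (p * q))
    (hxp : ZMod.castHom (dvd_mul_right p q) (ZMod p) x = 1)
    (hxq : ZMod.castHom (dvd_mul_left q p) (ZMod q) x = -3) :
    ∃ u v w : (ZMod (p * q))ˣ,
      (u : ZMod (p * q)) = -x - 2 ∧ (v : ZMod (p * q)) = -1 ∧ (w : ZMod (p * q)) = x ∧
      orderOf u = (p - 1) / 2 ∧ orderOf v = 2 ∧ orderOf w = q - 1 ∧
      Function.Bijective
        (fun pr : (Subgroup.zpowers u) × (Subgroup.zpowers v) × (Subgroup.zpowers w) =>
          (pr.1 : (ZMod (p*q))ˣ) * (pr.2.1 : (ZMod (p*q))ˣ) * (pr.2.2 : (ZMod (p*q))ˣ)) ∧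
      (-1 : ZMod (p * q)) - (-x - 2) = x - (-1) := by
  haveI : Fact p.Prime := ⟨hp⟩
  haveI : Fact q.Prime := ⟨hq⟩
  have hpq : p ≠ q := by
    rintro rfl
    rw [hordp] at hordq; omega
  have hco : Nat.Coprime p q := (Nat.coprime_primes hp hq).mpr hpq
  haveI : NeZero (p * q) := ⟨Nat.mul_ne_zero hp.pos.ne' hq.pos.ne'⟩
  set e := ZMod.chineseRemainder hco with he
  have hfst : ∀ y : ZMod (p * q), (e y).1 = ZMod.castHom (dvd_mul_right p q) (ZMod p) y := by
    intro y
    exact RingHom.congr_fun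
      (RingHom.ext_zmod ((RingHom.fst (ZMod p) (ZMod q)).comp (e : ZMod (p*q) →+* ZMod p × ZMod q)) _) y
  have hsnd : ∀ y : ZMod (p * q), (e y).2 = ZMod.castHom (dvd_mul_left q p) (ZMod q) y := by
    intro y
    exact RingHom.congr_fun
      (RingHom.ext_zmod ((RingHom.snd (ZMod p) (ZMod q)).comp (e : ZMod (p*q) →+* ZMod p × ZMod q)) _) y
  have hex : e x = (1, -3) := Prod.ext (by rw [hfst]; exact hxp) (by rw [hsnd]; exact hxq)
  have heu : e (-x - 2) = (-3, 1) := by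
    rw [map_sub, map_neg, hex, map_ofNat]
    ext <;> simp <;> ring
  have hev : e (-1 : ZMod (p*q)) = (-1, -1) := by
    rw [map_neg, map_one]; rfl
  have h3gen : ∀ r : ℕ, r.Prime → 3 < r → (-3 : ZMod r) ≠ 0 := by
    intro r hr hr3 h
    have h3 : ((3 : ℕ) : ZMod r) = 0 := by
      push_cast
      linear_combination -h
    rw [ZMod.natCast_eq_zero_iff] at h3
    exact absurd (Nat.le_of_dvd (by norm_num) h3) (by omega)
  have h3p : (-3 : ZMod p) ≠ 0 := h3gen p hp hp3
  have h3q : (-3 : ZMod q) ≠ 0 := h3gen q hq hq3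
  set F : (ZMod p)ˣ × (ZMod q)ˣ ≃* (ZMod (p*q))ˣ :=
    MulEquiv.prodUnits.symm.trans (Units.mapEquiv e.symm.toMulEquiv) with hFdef
  have hF : ∀ (a : (ZMod p)ˣ) (b : (ZMod q)ˣ),
      ((F (a, b) : (ZMod (p*q))ˣ) : ZMod (p*q)) = e.symm (↑a, ↑b) := fun a b => rfl
  set up : (ZMod p)ˣ := Units.mk0 (-3) h3p with hup
  set vp : (ZMod p)ˣ := Units.mk0 (-1) (neg_ne_zero.mpr one_ne_zero) with hvp
  set vq : (ZMod q)ˣ := Units.mk0 (-1) (neg_ne_zero.mpr one_ne_zero) with hvq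
  set wq : (ZMod q)ˣ := Units.mk0 (-3) h3q with hwq
  set u : (ZMod (p*q))ˣ := F (up, 1) with hu
  set v : (ZMod (p*q))ˣ := F (vp, vq) with hv
  set w : (ZMod (p*q))ˣ := F (1, wq) with hw
  have hcu : (u : ZMod (p*q)) = -x - 2 := by
    rw [hu, hF]
    simp only [hup, Units.val_mk0, Units.val_one]
    rw [← heu, RingEquiv.symm_apply_apply]
  have hcv : (v : ZMod (p*q)) = -1 := by
    rw [hv, hF]
    simp only [hvp, hvq, Units.val_mk0]
    rw [← hev, RingEquiv.symm_apply_apply]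
  have hcw : (w : ZMod (p*q)) = x := by
    rw [hw, hF]
    simp only [hwq, Units.val_mk0, Units.val_one]
    rw [← hex, RingEquiv.symm_apply_apply]
  -- orders of components
  have h2p : (2 : ℕ) < p := by omega
  have h2q : (2 : ℕ) < q := by omega
  haveI : Fact (2 < p) := ⟨h2p⟩
  haveI : Fact (2 < q) := ⟨h2q⟩
  have hcharp : ringChar (ZMod p) ≠ 2 := by
    rw [ZMod.ringChar_zmod_n]; omega
  have hcharq : ringChar (ZMod q) ≠ 2 := by
    rw [ZMod.ringChar_zmod_n]; omega
  have houp : orderOf up = (p - 1) / 2 := by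
    rw [← orderOf_units]; exact hordp
  have howq : orderOf wq = q - 1 := by
    rw [← orderOf_units]; exact hordq
  have hovp : orderOf vp = 2 := by
    rw [← orderOf_units]
    show orderOf (-1 : ZMod p) = 2
    rw [orderOf_neg_one, if_neg hcharp]
  have hovq : orderOf vq = 2 := by
    rw [← orderOf_units]
    show orderOf (-1 : ZMod q) = 2
    rw [orderOf_neg_one, if_neg hcharq]
  -- orders of u v w
  have hou : orderOf u = (p - 1) / 2 := by
    rw [hu, MulEquiv.orderOf_eq, Prod.orderOf, houp, orderOf_one, Nat.lcm_one_right]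
  have hov : orderOf v = 2 := by
    rw [hv, MulEquiv.orderOf_eq, Prod.orderOf, hovp, hovq]
    decide
  have how : orderOf w = q - 1 := by
    rw [hw, MulEquiv.orderOf_eq, Prod.orderOf, howq, orderOf_one, Nat.lcm_one_left]
  -- squares of vp, vq
  have hvp2 : vp ^ (2 : ℕ) = 1 := by rw [← hovp]; exact pow_orderOf_eq_one vp
  have hvq2 : vq ^ (2 : ℕ) = 1 := by rw [← hovq]; exact pow_orderOf_eq_one vq
  -- kernel triviality
  have hker : ∀ i j k : ℤ, u ^ i * v ^ j * w ^ k = 1 → u ^ i = 1 ∧ v ^ j = 1 ∧ w ^ k = 1 := by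
    intro i j k hikj
    have h0 : (up, (1 : (ZMod q)ˣ)) ^ i * (vp, vq) ^ j * ((1 : (ZMod p)ˣ), wq) ^ k = 1 := by
      apply F.injective
      rw [map_mul, map_mul, map_zpow, map_zpow, map_zpow, map_one]
      exact hikj
    have h0p : up ^ i * vp ^ j = 1 := by
      have := congrArg Prod.fst h0
      simpa using this
    have h0q : vq ^ j * wq ^ k = 1 := by
      have := congrArg Prod.snd h0
      simpa using this
    -- analyze mod p
    have hmodd : ¬ (2 ∣ (p - 1) / 2) := by omega
    have ht : vp ^ j = up ^ (-i) := by
      rw [zpow_neg, eq_inv_iff_mul_eq_one, mul_comm]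
      exact h0p
    have ht2 : (vp ^ j) ^ (2 : ℕ) = 1 := by
      rw [← zpow_natCast, ← zpow_mul, mul_comm, zpow_mul, zpow_natCast, hvp2, one_zpow]
    have htm : (vp ^ j) ^ ((p - 1) / 2 : ℕ) = 1 := by
      rw [ht, ← zpow_natCast, ← zpow_mul, mul_comm, zpow_mul, zpow_natCast, ← houp,
        pow_orderOf_eq_one, one_zpow]
    have htord : orderOf (vp ^ j) ∣ Nat.gcd 2 ((p - 1) / 2) :=
      Nat.dvd_gcd (orderOf_dvd_of_pow_eq_one ht2) (orderOf_dvd_of_pow_eq_one htm)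
    have hgcd1 : Nat.gcd 2 ((p - 1) / 2) = 1 :=
      Nat.coprime_two_left.mpr (Nat.odd_iff.mpr (by omega))
    have hvpj : vp ^ j = 1 := by
      rw [← orderOf_eq_one_iff]
      have := htord
      rw [hgcd1, Nat.dvd_one] at this
      exact this
    have hupi : up ^ i = 1 := by
      have h1 : up ^ (-i) = 1 := ht ▸ hvpj
      rw [zpow_neg, inv_eq_one] at h1
      exact h1
    -- j is even
    have hj2 : (2 : ℤ) ∣ j := by
      have := orderOf_dvd_iff_zpow_eq_one.mpr hvpj
      rwa [hovp] at this
    obtain ⟨s, rfl⟩ := hj2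
    have hvqj : vq ^ ((2 : ℤ) * s) = 1 := by
      rw [zpow_mul]
      norm_cast
      rw [hvq2, one_zpow]
    have hwqk : wq ^ k = 1 := by
      rw [hvqj, one_mul] at h0q
      exact h0q
    refine ⟨?_, ?_, ?_⟩
    · rw [hu, ← map_zpow]
      have : (up, (1 : (ZMod q)ˣ)) ^ i = (up ^ i, (1 : (ZMod q)ˣ) ^ i) := rfl
      rw [this, hupi, one_zpow]
      exact map_one F
    · rw [hv, ← map_zpow]
      have : (vp, vq) ^ ((2 : ℤ) * s) = (vp ^ ((2:ℤ) * s), vq ^ ((2:ℤ) * s)) := rfl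
      rw [this, hvpj, hvqj]
      exact map_one F
    · rw [hw, ← map_zpow]
      have : ((1 : (ZMod p)ˣ), wq) ^ k = ((1 : (ZMod p)ˣ) ^ k, wq ^ k) := rfl
      rw [this, hwqk, one_zpow]
      exact map_one F
  refine ⟨u, v, w, hcu, hcv, hcw, hou, hov, how, ?_, by ring⟩
  rw [Nat.bijective_iff_injective_and_card]
  refine ⟨inj_aux3 hker, ?_⟩
  have hcard1 : Nat.card ((Subgroup.zpowers u) × (Subgroup.zpowers v) × (Subgroup.zpowers w))
      = (p - 1) / 2 * (2 * (q - 1)) := by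
    rw [Nat.card_prod, Nat.card_prod, Nat.card_zpowers, Nat.card_zpowers, Nat.card_zpowers,
      hou, hov, how]
  have hcard2 : Nat.card (ZMod (p * q))ˣ = (p - 1) * (q - 1) := by
    rw [Nat.card_eq_fintype_card, ZMod.card_units_eq_totient, Nat.totient_mul hco,
      Nat.totient_prime hp, Nat.totient_prime hq]
  rw [hcard1, hcard2]
  have h2d : (p - 1) / 2 * 2 = p - 1 := Nat.div_mul_cancel (by omega)
  calc (p - 1) / 2 * (2 * (q - 1)) = ((p - 1) / 2 * 2) * (q - 1) := by ring
    _ = (p - 1) * (q - 1) := by rw [h2d]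


theorem stmt12 (p q : ℕ) (hp : p.Prime) (hq : q.Prime) (hp3 : 3 < p) (hq3 : 3 < q)
    (hp4 : p % 4 = 3)
    (hordp : orderOf (-3 : ZMod p) = (p - 1) / 2) (hordq : orderOf (-3 : ZMod q) = q - 1)
    (x : ZMod (p * q))
    (hxp : ZMod.castHom (dvd_mul_right p q) (ZMod p) x = 1)
    (hxq : ZMod.castHom (dvd_mul_left q p) (ZMod q) x = -3) :
    ∃ u v w : (ZMod (p * q))ˣ,
      (u : ZMod (p * q)) = -x - 2 ∧ (v : ZMod (p * q)) = -1 ∧ (w : ZMod (p * q)) = x ∧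
      orderOf u = (p - 1) / 2 ∧ orderOf v = 2 ∧ orderOf w = q - 1 ∧
      IsDirectProd3 u v w ∧
      (-1 : ZMod (p * q)) - (-x - 2) = x - (-1) := by
  obtain ⟨u, v, w, h1, h2, h3, h4, h5, h6, h7, h8⟩ :=
    stmt12_aux p q hp hq hp3 hq3 hp4 hordp hordq x hxp hxq
  exact ⟨u, v, w, h1, h2, h3, h4, h5, h6, h7, h8⟩
end

section
/- In the multiplicative group of the finite field GF(121) = GF(11²), with ζ a fixed primitive root (a root of the Conway polynomial x² + 7x + 2 over GF(11)), the elements ζ^72, ζ^15, ζ^80 are in arithmetic progression in GF(121), have multiplicative orders 5, 8, 3 respectively, and GF(121)^× is the internal direct product ⟨ζ^72⟩ × ⟨ζ^15⟩ × ⟨ζ^80⟩. -/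
instance : Fact (Nat.Prime 11) := ⟨by norm_num⟩

theorem stmt19 (ζ : (GaloisField 11 2)ˣ)
    (hconway : (ζ : GaloisField 11 2) ^ 2 + 7 * (ζ : GaloisField 11 2) + 2 = 0)
    (hprim : orderOf ζ = 120) :
    ((ζ ^ 72 : (GaloisField 11 2)ˣ) : GaloisField 11 2) +
      ((ζ ^ 80 : (GaloisField 11 2)ˣ) : GaloisField 11 2) =
      2 * ((ζ ^ 15 : (GaloisField 11 2)ˣ) : GaloisField 11 2) ∧
    orderOf (ζ ^ 72) = 5 ∧ orderOf (ζ ^ 15) = 8 ∧ orderOf (ζ ^ 80) = 3 ∧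
    IsDirectProd3 (ζ ^ 72) (ζ ^ 15) (ζ ^ 80) := by
  set a : GaloisField 11 2 := (ζ : GaloisField 11 2) with ha
  have h11 : (11 : GaloisField 11 2) = 0 := by
    have := CharP.cast_eq_zero (GaloisField 11 2) 11
    exact_mod_cast this
  have h2 : a ^ 2 = 4 * a + 9 := by linear_combination hconway - (a + 1) * h11
  have h8 : a ^ 8 = 5 * a + 4 := by
    linear_combination (a^6 + 4*a^5 + 25*a^4 + 136*a^3 + 769*a^2 + 4300*a + 24121) * h2 +
      (12289*a + 19735) * h11
  have h12 : a ^ 12 = 2 := by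
    linear_combination (a^10 + 4*a^9 + 25*a^8 + 136*a^7 + 769*a^6 + 4300*a^5 + 24121*a^4 +
      135184*a^3 + 757825*a^2 + 4247956*a + 23812249) * h2 + (12134600*a + 19482749) * h11
  have h15 : a ^ 15 = 6 * a + 6 := by
    linear_combination (a^13 + 4*a^12 + 25*a^11 + 136*a^10 + 769*a^9 + 4300*a^8 + 24121*a^7 +
      135184*a^6 + 757825*a^5 + 4247956*a^4 + 23812249*a^3 + 133480600*a^2 + 748232641*a +
      4194255964) * h2 + (2137374329*a + 3431663970) * h11
  have h72 : a ^ 72 = 9 := by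
    linear_combination (a^60 + 2*a^48 + 4*a^36 + 8*a^24 + 16*a^12 + 32) * h12 + 5 * h11
  have h80 : a ^ 80 = a + 3 := by
    linear_combination (a^8) * h72 + 9 * h8 + (4*a + 3) * h11
  have hAP : ((ζ ^ 72 : (GaloisField 11 2)ˣ) : GaloisField 11 2) +
      ((ζ ^ 80 : (GaloisField 11 2)ˣ) : GaloisField 11 2) =
      2 * ((ζ ^ 15 : (GaloisField 11 2)ˣ) : GaloisField 11 2) := by
    push_cast
    linear_combination h72 + h80 - 2 * h15 - a * h11
  have ho72 : orderOf (ζ ^ 72) = 5 := by rw [orderOf_pow, hprim]; norm_num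
  have ho15 : orderOf (ζ ^ 15) = 8 := by rw [orderOf_pow, hprim]; norm_num
  have ho80 : orderOf (ζ ^ 80) = 3 := by rw [orderOf_pow, hprim]; norm_num
  refine ⟨hAP, ho72, ho15, ho80, ?_⟩
  rw [IsDirectProd3, Nat.bijective_iff_surjective_and_card]
  constructor
  · -- surjectivity
    intro g
    have htop : Subgroup.zpowers ζ = ⊤ := by
      apply Subgroup.eq_top_of_card_eq
      rw [Nat.card_zpowers, hprim, Nat.card_units, GaloisField.card 11 2 (by norm_num)]
      norm_num
    have hg : g ∈ Subgroup.zpowers ζ := htop ▸ Subgroup.mem_top g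
    obtain ⟨k, hk⟩ := hg
    have h120 : ζ ^ (120 : ℤ) = 1 := by
      rw [show ((120 : ℤ) = (120 : ℕ)) from rfl, zpow_natCast, ← hprim, pow_orderOf_eq_one]
    refine ⟨⟨⟨(ζ ^ 72) ^ (3 * k), Subgroup.zpow_mem_zpowers _ _⟩,
      ⟨(ζ ^ 15) ^ (7 * k), Subgroup.zpow_mem_zpowers _ _⟩,
      ⟨(ζ ^ 80) ^ (2 * k), Subgroup.zpow_mem_zpowers _ _⟩⟩, ?_⟩
    show (ζ ^ 72) ^ (3 * k) * ((ζ ^ 15) ^ (7 * k)) * ((ζ ^ 80) ^ (2 * k)) = g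
    rw [← hk, ← zpow_natCast ζ 72, ← zpow_natCast ζ 15, ← zpow_natCast ζ 80,
      ← zpow_mul, ← zpow_mul, ← zpow_mul, ← zpow_add, ← zpow_add]
    rw [show ((72 : ℕ) : ℤ) * (3 * k) + ((15 : ℕ) : ℤ) * (7 * k) + ((80 : ℕ) : ℤ) * (2 * k) =
      120 * (4 * k) + k by push_cast; ring, zpow_add, zpow_mul, h120, one_zpow, one_mul]
  · -- cardinalities
    rw [Nat.card_prod, Nat.card_prod, Nat.card_zpowers, Nat.card_zpowers, Nat.card_zpowers,
      ho72, ho15, ho80, Nat.card_units, GaloisField.card 11 2 (by norm_num)]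
    norm_num
end
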